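/- arXiv:1910.05058 — 4 statements merged into one kernel-verified Lean document; each statement's English description precedes it below -/
import Mathlib

section
/- A crystal is Z3-connected if and only if it admits a proper vertex 3-coloring. -/
/-!
Let `χ_T` be the indicator of the vertex set of a triangle `T`. On a triangle-tree, a
sum-zero `β : V → ℤ/3` is the boundary of an orientation iff it is not of the form
`∑_T ±χ_T`, one sign per triangle ("exceptional"). This is kept as an invariant while the tree
is grown: the orientations of the two edges `va`, `vb` at a new apex `v` over the edge `ab` are
forced by `β v` when `β v ≠ 0`, and then they shift `β` by `±χ_{abv}`; when `β v = 0` they shift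
`β` by `±(1_a - 1_b)`, and the two shifts cannot both be exceptional because exceptional
functions are orthogonal to a proper 3-colouring `c` (on a triangle the colours are
`0, 1, 2`, which sum to `0`) while `c a ≠ c b`. The same induction shows that the `χ_T` span
every sum-zero function orthogonal to `c`.

For the extra edge `uv` of the crystal, `β` is realizable iff one of `β ∓ (1_u - 1_v)` is not
exceptional. If `c u ≠ c v` this always holds, by the same orthogonality. If `c u = c v`, then
`1_u - 1_v` lies in the span of the `χ_T`, so it is half the difference of two exceptional
functions, and their midpoint is a boundary that no orientation realizes.
-/

open scoped Classical

/-- A finite loopless multigraph: finite vertex and edge types, each edge has an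
unordered pair of distinct endpoints (parallel edges allowed, loops forbidden). -/
structure Multigraph where
  V : Type
  E : Type
  fintypeV : Fintype V
  fintypeE : Fintype E
  ends : E → Sym2 V
  loopless : ∀ e, ¬ (ends e).IsDiag

attribute [instance] Multigraph.fintypeV Multigraph.fintypeE

namespace Multigraph

/-- `D` is an orientation of `G`: each edge is assigned an ordered pair (tail, head)
compatible with its endpoints. -/
def IsOrientation (G : Multigraph) (D : G.E → G.V × G.V) : Prop :=
  ∀ e, G.ends e = s((D e).1, (D e).2)

/-- Out-degree of `v` under the orientation `D` (tail = first component). -/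
noncomputable def outDeg (G : Multigraph) (D : G.E → G.V × G.V) (v : G.V) : ℕ :=
  {e : G.E | (D e).1 = v}.ncard

/-- In-degree of `v` under the orientation `D` (head = second component). -/
noncomputable def inDeg (G : Multigraph) (D : G.E → G.V × G.V) (v : G.V) : ℕ :=
  {e : G.E | (D e).2 = v}.ncard

/-- Flow conservation: at every vertex the sum of `f` over outgoing arcs equals the sum
over incoming arcs. -/
def IsConserving (G : Multigraph) (D : G.E → G.V × G.V) (f : G.E → ℤ) : Prop :=
  ∀ v : G.V,
    (∑ e : G.E, if (D e).1 = v then f e else 0) =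
      ∑ e : G.E, if (D e).2 = v then f e else 0

/-- `G` has a nowhere-zero 3-flow. -/
def HasNZ3Flow (G : Multigraph) : Prop :=
  ∃ (D : G.E → G.V × G.V) (f : G.E → ℤ),
    G.IsOrientation D ∧ (∀ e, 1 ≤ |f e| ∧ |f e| ≤ 2) ∧ G.IsConserving D f

/-- `G` is `Z3`-connected: every `Z3`-boundary is realized by some orientation. -/
def Z3Connected (G : Multigraph) : Prop :=
  ∀ β : G.V → ZMod 3, (∑ v : G.V, β v) = 0 →
    ∃ D : G.E → G.V × G.V, G.IsOrientation D ∧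
      ∀ v : G.V, ((G.outDeg D v : ZMod 3) - (G.inDeg D v : ZMod 3)) = β v

/-- Degree of a vertex: number of edges incident with it. -/
noncomputable def degree (G : Multigraph) (v : G.V) : ℕ :=
  {e : G.E | v ∈ G.ends e}.ncard

/-- `(S, F)` is a triangle-tree subgraph of `G`: start from a triangle and repeatedly
add a new vertex joined to the two endpoints of an existing edge. -/
inductive IsTriangleTree (G : Multigraph) : Set G.V → Set G.E → Prop
  | base (x y z : G.V) (e1 e2 e3 : G.E)
      (hxy : x ≠ y) (hxz : x ≠ z) (hyz : y ≠ z)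
      (h1 : G.ends e1 = s(x, y)) (h2 : G.ends e2 = s(y, z)) (h3 : G.ends e3 = s(x, z)) :
      IsTriangleTree G {x, y, z} {e1, e2, e3}
  | grow (S : Set G.V) (F : Set G.E) (hT : IsTriangleTree G S F)
      (v a b : G.V) (hv : v ∉ S) (e : G.E) (he : e ∈ F) (hab : G.ends e = s(a, b))
      (e1 e2 : G.E) (h1 : G.ends e1 = s(v, a)) (h2 : G.ends e2 = s(v, b)) :
      IsTriangleTree G (insert v S) (insert e1 (insert e2 F))

/-- `G` contains a spanning triangle-tree. -/
def HasSpanningTriangleTree (G : Multigraph) : Prop :=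
  ∃ F : Set G.E, G.IsTriangleTree Set.univ F

/-- Degree of `v` inside the edge set `F`. -/
noncomputable def degIn (G : Multigraph) (F : Set G.E) (v : G.V) : ℕ :=
  {e : G.E | e ∈ F ∧ v ∈ G.ends e}.ncard

/-- `(S, F)` is a triangle-path subgraph: a triangle-tree which is either a single
triangle or has exactly two leaves (vertices of degree 2). -/
def IsTrianglePath (G : Multigraph) (S : Set G.V) (F : Set G.E) : Prop :=
  G.IsTriangleTree S F ∧ (S.ncard = 3 ∨ {v ∈ S | G.degIn F v = 2}.ncard = 2)

/-- `(S, F)` is a subgraph of `G`: endpoints of every chosen edge are chosen vertices. -/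
def Subgraph (G : Multigraph) (S : Set G.V) (F : Set G.E) : Prop :=
  ∀ e ∈ F, ∀ v, v ∈ G.ends e → v ∈ S

/-- `G` is isomorphic to the complete (simple) graph on `n` vertices. -/
def IsCompleteGraphOn (G : Multigraph) (n : ℕ) : Prop :=
  ∃ (φ : G.V ≃ Fin n) (ψ : G.E ≃ {p : Sym2 (Fin n) // ¬ p.IsDiag}),
    ∀ e, Sym2.map (⇑φ) (G.ends e) = (ψ e).1

def IsK3 (G : Multigraph) : Prop := G.IsCompleteGraphOn 3

def IsK4 (G : Multigraph) : Prop := G.IsCompleteGraphOn 4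

/-- `G` is a bull-growing of `H` (equivalently, `H` is the bull-reduction of `G`):
`u, v` are adjacent vertices of degree 3 in `G` with common neighbour `w`, the remaining
neighbours of `u`, `v` are `a`, `b`, and `H = G - u - v + ab` (with a loop deleted when
`a = b`). -/
def IsBullGrowing (G H : Multigraph) : Prop :=
  ∃ (u v w a b : G.V) (euv euw evw eua evb : G.E),
    G.ends euv = s(u, v) ∧ G.ends euw = s(u, w) ∧ G.ends evw = s(v, w) ∧
    G.ends eua = s(u, a) ∧ G.ends evb = s(v, b) ∧
    a ≠ v ∧ b ≠ u ∧
    euv ≠ euw ∧ euv ≠ eua ∧ euw ≠ eua ∧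
    euv ≠ evw ∧ euv ≠ evb ∧ evw ≠ evb ∧
    {e : G.E | u ∈ G.ends e} = {euv, euw, eua} ∧
    {e : G.E | v ∈ G.ends e} = {euv, evw, evb} ∧
    ∃ φ : H.V → G.V, Function.Injective φ ∧
      Set.range φ = {x : G.V | x ≠ u ∧ x ≠ v} ∧
      ((a = b → ∃ ψ : H.E → G.E, Function.Injective ψ ∧
          Set.range ψ = {e : G.E | e ∉ ({euv, euw, evw, eua, evb} : Set G.E)} ∧
          ∀ e, G.ends (ψ e) = Sym2.map φ (H.ends e)) ∧
       (a ≠ b → ∃ (e0 : H.E) (ψ : H.E → G.E),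
          Sym2.map φ (H.ends e0) = s(a, b) ∧
          Set.InjOn ψ {e : H.E | e ≠ e0} ∧
          ψ '' {e : H.E | e ≠ e0} = {e : G.E | e ∉ ({euv, euw, evw, eua, evb} : Set G.E)} ∧
          ∀ e, e ≠ e0 → G.ends (ψ e) = Sym2.map φ (H.ends e)))

/-- `(S, F)` is a triangle (a `K3` subgraph) of `G`. -/
def IsTriangleSub (G : Multigraph) (S : Set G.V) (F : Set G.E) : Prop :=
  ∃ (x y z : G.V) (e1 e2 e3 : G.E),
    x ≠ y ∧ x ≠ z ∧ y ≠ z ∧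
    G.ends e1 = s(x, y) ∧ G.ends e2 = s(y, z) ∧ G.ends e3 = s(x, z) ∧
    S = {x, y, z} ∧ F = {e1, e2, e3}

/-- The subgraph `(S, F)` of `G` is `Z3`-connected (as a graph in its own right). -/
def SubZ3Connected (G : Multigraph) (S : Set G.V) (F : Set G.E) : Prop :=
  ∀ β : G.V → ZMod 3, (∀ v, v ∉ S → β v = 0) → (∑ v : G.V, β v) = 0 →
    ∃ D : G.E → G.V × G.V, G.IsOrientation D ∧
      ∀ v ∈ S, (({e : G.E | e ∈ F ∧ (D e).1 = v}.ncard : ZMod 3)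
        - ({e : G.E | e ∈ F ∧ (D e).2 = v}.ncard : ZMod 3)) = β v

/-- `G` is the 2-sum of its subgraphs `(SA, FA)` and `(SB, FB)`:
`E(G) = E(A) ∪ E(B)`, `|E(A) ∩ E(B)| = 1` and `|V(A) ∩ V(B)| = 2`. -/
def IsTwoSum (G : Multigraph) (SA : Set G.V) (FA : Set G.E)
    (SB : Set G.V) (FB : Set G.E) : Prop :=
  G.Subgraph SA FA ∧ G.Subgraph SB FB ∧
  FA ∪ FB = Set.univ ∧ (FA ∩ FB).ncard = 1 ∧ (SA ∩ SB).ncard = 2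

/-- All vertices of `G` are joined by walks using only edges from `F`. -/
def ConnOn (G : Multigraph) (F : Set G.E) : Prop :=
  ∀ u v : G.V, Relation.ReflTransGen (fun x y => ∃ e ∈ F, G.ends e = s(x, y)) u v

/-- The spanning subgraph with edge set `F` is 2-edge-connected:
connected and with no cut edge. -/
def TwoEdgeConnOn (G : Multigraph) (F : Set G.E) : Prop :=
  G.ConnOn F ∧ ∀ e ∈ F, G.ConnOn (F \ {e})

/-- The orientation `D` is strongly connected. -/
def StronglyConnected (G : Multigraph) (D : G.E → G.V × G.V) : Prop :=
  ∀ u v : G.V, Relation.ReflTransGen (fun x y => ∃ e : G.E, D e = (x, y)) u v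

/-- `G` belongs to the class `S3`: every `Z3`-boundary is realized by a strongly
connected orientation. -/
def InS3 (G : Multigraph) : Prop :=
  ∀ β : G.V → ZMod 3, (∑ v : G.V, β v) = 0 →
    ∃ D : G.E → G.V × G.V, G.IsOrientation D ∧ G.StronglyConnected D ∧
      ∀ v : G.V, ((G.outDeg D v : ZMod 3) - (G.inDeg D v : ZMod 3)) = β v

/-- `G` has a cycle (of length ≥ 2, so possibly a pair of parallel edges) all of whose
edges lie in `A`. -/
def HasCycleIn (G : Multigraph) (A : Set G.E) : Prop :=
  ∃ (vs : List G.V) (es : List G.E),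
    2 ≤ vs.length ∧ vs.Nodup ∧ es.Nodup ∧ es.length = vs.length ∧
    (∀ e ∈ es, e ∈ A) ∧
    ∀ (i : ℕ) (h1 : i < es.length) (h2 : i < vs.length)
      (h3 : (i + 1) % vs.length < vs.length),
      G.ends (es.get ⟨i, h1⟩) = s(vs.get ⟨i, h2⟩, vs.get ⟨(i + 1) % vs.length, h3⟩)

/-- `(vs, es)` is a path from `u` to `v` in `G`. -/
def IsPath (G : Multigraph) (u v : G.V) (vs : List G.V) (es : List G.E) : Prop :=
  vs.Nodup ∧ es.Nodup ∧ vs.head? = some u ∧ vs.getLast? = some v ∧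
  vs.length = es.length + 1 ∧
  ∀ (i : ℕ) (h1 : i < es.length) (h2 : i < vs.length) (h3 : i + 1 < vs.length),
    G.ends (es.get ⟨i, h1⟩) = s(vs.get ⟨i, h2⟩, vs.get ⟨i + 1, h3⟩)

/-- `H` is isomorphic to the subgraph `(S, F)` of `G`. -/
def IsIsoToSub (H G : Multigraph) (S : Set G.V) (F : Set G.E) : Prop :=
  ∃ (φ : H.V → G.V) (ψ : H.E → G.E),
    Function.Injective φ ∧ Set.range φ = S ∧
    Function.Injective ψ ∧ Set.range ψ = F ∧
    ∀ e, G.ends (ψ e) = Sym2.map φ (H.ends e)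

/-- `G'` is (isomorphic to) the graph obtained from `G` by adding two new edges with
endpoint pairs `p` and `q`. -/
def IsAddTwoEdges (G : Multigraph) (p q : Sym2 G.V) (G' : Multigraph) : Prop :=
  ∃ (φ : G.V ≃ G'.V) (e1 e2 : G'.E), e1 ≠ e2 ∧
    G'.ends e1 = Sym2.map (⇑φ) p ∧ G'.ends e2 = Sym2.map (⇑φ) q ∧
    ∃ ψ : G.E → G'.E, Function.Injective ψ ∧
      Set.range ψ = {e : G'.E | e ≠ e1 ∧ e ≠ e2} ∧
      ∀ e, G'.ends (ψ e) = Sym2.map (⇑φ) (G.ends e)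

/-- `G'` is (isomorphic to) the graph obtained from `G` by deleting the edges in `X`
and adding one new edge with endpoint pair `p`. -/
def IsDeleteAddEdge (G : Multigraph) (X : Set G.E) (p : Sym2 G.V) (G' : Multigraph) : Prop :=
  ∃ (φ : G.V ≃ G'.V) (e0 : G'.E),
    G'.ends e0 = Sym2.map (⇑φ) p ∧
    ∃ ψ : {e : G.E // e ∉ X} → G'.E, Function.Injective ψ ∧
      Set.range ψ = {e : G'.E | e ≠ e0} ∧
      ∀ e : {e : G.E // e ∉ X}, G'.ends (ψ e) = Sym2.map (⇑φ) (G.ends e.1)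

/-- `G` is a crystal: a spanning triangle-path plus one extra edge joining its two
leaves. -/
def IsCrystal (G : Multigraph) : Prop :=
  ∃ (F : Set G.E) (u v : G.V) (e0 : G.E),
    G.IsTrianglePath Set.univ F ∧ u ≠ v ∧
    G.degIn F u = 2 ∧ G.degIn F v = 2 ∧
    e0 ∉ F ∧ G.ends e0 = s(u, v) ∧ insert e0 F = Set.univ

/-- The subgraph with edge set `F` is triangularly connected: any two of its edges lie
on a common triangle-path inside it. -/
def TriangularlyConnectedOn (G : Multigraph) (F : Set G.E) : Prop :=
  ∀ e1 ∈ F, ∀ e2 ∈ F, ∃ (S : Set G.V) (F' : Set G.E),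
    F' ⊆ F ∧ G.IsTrianglePath S F' ∧ e1 ∈ F' ∧ e2 ∈ F'

/-- `G` is triangularly connected. -/
def TriangularlyConnected (G : Multigraph) : Prop :=
  G.TriangularlyConnectedOn Set.univ

/-- `G` contains a spanning triangularly-connected subgraph. -/
def HasSpanningTriangularlyConnected (G : Multigraph) : Prop :=
  ∃ F : Set G.E, G.TriangularlyConnectedOn F

/-- `G` admits a circular `t/s`-flow. -/
def HasCircularFlow (G : Multigraph) (t s : ℤ) : Prop :=
  ∃ (D : G.E → G.V × G.V) (f : G.E → ℤ),
    G.IsOrientation D ∧ (∀ e, s ≤ |f e| ∧ |f e| ≤ t - s) ∧ G.IsConserving D f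

end Multigraph

/-- `G` can be obtained from `K4` by a (possibly empty) series of bull-growing
operations. -/
inductive FromK4ByBull : Multigraph → Prop
  | base (G : Multigraph) : G.IsK4 → FromK4ByBull G
  | grow (G H : Multigraph) : FromK4ByBull H → G.IsBullGrowing H → FromK4ByBull G

theorem Set.natCast_ncard_setOf_eq_sum {α R : Type*} [Fintype α] [AddCommMonoidWithOne R]
    (P : α → Prop) [DecidablePred P] :
    (({a | P a}.ncard : ℕ) : R) = ∑ a, if P a then 1 else 0 := by
  rw [Set.ncard_eq_toFinset_card', Set.toFinset_ofPred, Finset.natCast_card_filter]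

theorem support_sub_subset_iff {V : Type*} {S : Set V} {v : V} (hv : v ∉ S) {β x : V → ZMod 3}
    (hx : Function.support x ⊆ insert v S) :
    Function.support (β - x) ⊆ S ↔ Function.support β ⊆ insert v S ∧ β v = x v := by
  simp only [Function.support_subset_iff', Pi.sub_apply, sub_eq_zero] at hx ⊢
  refine ⟨fun h => ⟨fun w hw => (h w fun hw' => hw (Set.mem_insert_of_mem _ hw')).trans
    (hx w hw), h v hv⟩, fun ⟨h, hvx⟩ w hw => ?_⟩
  rcases eq_or_ne w v with rfl | hwv
  · exact hvx
  · have hw' : w ∉ insert v S := by simp [hwv, hw]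
    rw [h w hw', hx w hw']

section TriangleSpan

variable {V : Type*} [DecidableEq V]

def dipole (a b : V) : V → ZMod 3 := Pi.single a 1 - Pi.single b 1

def indicator3 (T : V × V × V) : V → ZMod 3 :=
  Pi.single T.1 1 + Pi.single T.2.1 1 + Pi.single T.2.2 1

def triangleSpan (L : List (V × V × V)) : Submodule (ZMod 3) (V → ZMod 3) :=
  Submodule.span (ZMod 3) (indicator3 '' {T | T ∈ L})

/-- The functions `∑_{T ∈ L} ε_T • indicator3 T` with every `ε_T ≠ 0`, i.e. `ε_T = ±1`. -/
def IsExceptional : List (V × V × V) → (V → ZMod 3) → Prop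
  | [], β => β = 0
  | T :: L, β => ∃ ε : ZMod 3, ε ≠ 0 ∧ IsExceptional L (β - ε • indicator3 T)

theorem zmod3_eq_one_or_eq_neg_one : ∀ {ε : ZMod 3}, ε ≠ 0 → ε = 1 ∨ ε = -1 := by
  decide

theorem dipole_swap (a b : V) : dipole b a = -dipole a b :=
  (neg_sub _ _).symm

theorem support_dipole_subset (a b : V) : Function.support (dipole a b) ⊆ {a, b} := by
  intro w hw
  by_contra h
  simp only [Set.mem_insert_iff, Set.mem_singleton_iff, not_or] at h
  simp [dipole, h.1, h.2] at hw

theorem support_indicator3_subset (T : V × V × V) :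
    Function.support (indicator3 T) ⊆ {T.1, T.2.1, T.2.2} := by
  intro w hw
  by_contra h
  simp only [Set.mem_insert_iff, Set.mem_singleton_iff, not_or] at h
  simp [indicator3, h.1, h.2.1, h.2.2] at hw

theorem indicator3_apply_of_ne {a b v : V} (hav : a ≠ v) (hbv : b ≠ v) :
    indicator3 (a, b, v) v = 1 := by
  simp [indicator3, hav.symm, hbv.symm]

theorem neg_dipole_add_dipole (v a b : V) :
    -(dipole v a + dipole v b) = indicator3 (a, b, v) := by
  ext w
  simp only [dipole, indicator3, Pi.neg_apply, Pi.add_apply, Pi.sub_apply]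
  have h3 : (3 : ZMod 3) = 0 := rfl
  linear_combination -(Pi.single (M := fun _ => ZMod 3) v 1 w) * h3

theorem smul_dipole_add_neg_smul_dipole (v a b : V) (ε : ZMod 3) :
    ε • dipole v a + (-ε) • dipole v b = ε • dipole b a := by
  ext w
  simp only [dipole, Pi.smul_apply, Pi.add_apply, Pi.sub_apply, smul_eq_mul]
  ring

theorem mem_triangleSpan_cons {T : V × V × V} {L : List (V × V × V)} {γ : V → ZMod 3} :
    γ ∈ triangleSpan (T :: L) ↔ ∃ t : ZMod 3, γ - t • indicator3 T ∈ triangleSpan L := by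
  have : {T' | T' ∈ T :: L} = insert T {T' | T' ∈ L} := by ext; simp
  simp only [triangleSpan, this, Set.image_insert_eq, Submodule.mem_span_insert]
  exact exists_congr fun t => ⟨fun ⟨z, hz, h⟩ => by rwa [h, add_sub_cancel_left],
    fun h => ⟨_, h, (add_sub_cancel _ _).symm⟩⟩

theorem IsExceptional.mem_triangleSpan :
    ∀ {L : List (V × V × V)} {β : V → ZMod 3}, IsExceptional L β → β ∈ triangleSpan L
  | [], β, h => by
    change β = 0 at h
    exact h ▸ zero_mem _
  | T :: L, β, ⟨ε, _, h⟩ => mem_triangleSpan_cons.2 ⟨ε, h.mem_triangleSpan⟩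

theorem exists_isExceptional_sub_add :
    ∀ {L : List (V × V × V)} {γ : V → ZMod 3}, γ ∈ triangleSpan L →
      ∃ β, IsExceptional L (β - γ) ∧ IsExceptional L (β + γ)
  | [], γ, h => by
    have hγ : γ = 0 := by simpa [triangleSpan] using h
    exact ⟨0, by simp [IsExceptional, hγ], by simp [IsExceptional, hγ]⟩
  | T :: L, γ, h => by
    obtain ⟨t, ht⟩ := mem_triangleSpan_cons.1 h
    obtain ⟨β, h₁, h₂⟩ := exists_isExceptional_sub_add ht
    -- `b ∓ t` are both `±1` for a suitable `b`
    have key : ∀ t : ZMod 3, ∃ b : ZMod 3, b - t ≠ 0 ∧ b + t ≠ 0 := by decide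
    obtain ⟨b, hb₁, hb₂⟩ := key t
    refine ⟨β + b • indicator3 T, ⟨b - t, hb₁, ?_⟩, ⟨b + t, hb₂, ?_⟩⟩
    · convert h₁ using 1; module
    · convert h₂ using 1; module

variable [Fintype V]

theorem dipole_dotProduct (a b : V) (c : V → ZMod 3) : dipole a b ⬝ᵥ c = c a - c b := by
  simp [dipole, sub_dotProduct]

theorem indicator3_dotProduct (T : V × V × V) (c : V → ZMod 3) :
    indicator3 T ⬝ᵥ c = c T.1 + c T.2.1 + c T.2.2 := by
  simp [indicator3, add_dotProduct]

theorem eq_smul_dipole_of_support_subset {x z : V} (hxz : x ≠ z) {γ : V → ZMod 3}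
    (hsupp : Function.support γ ⊆ {x, z}) (hsum : ∑ w, γ w = 0) : γ = γ x • dipole x z := by
  rw [Function.support_subset_iff'] at hsupp
  have hz : γ z = -γ x := by
    rw [Fintype.sum_eq_add x z hxz fun w hw => hsupp w (by simp [hw.1, hw.2])] at hsum
    exact eq_neg_of_add_eq_zero_right hsum
  ext w
  by_cases hwx : w = x
  · simp [hwx, dipole, hxz.symm]
  by_cases hwz : w = z
  · simp [hwz, dipole, hxz, hz]
  · simp [hsupp w (by simp [hwx, hwz]), dipole, hwx, hwz]

theorem sum_dipole (a b : V) : ∑ w, dipole a b w = 0 := by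
  rw [← dotProduct_one, dipole_dotProduct, Pi.one_apply, Pi.one_apply, sub_self]

theorem sum_indicator3 (T : V × V × V) : ∑ w, indicator3 T w = 0 := by
  rw [← dotProduct_one, indicator3_dotProduct]
  simp only [Pi.one_apply]
  decide

theorem dotProduct_eq_zero_of_mem_triangleSpan {L : List (V × V × V)} {c γ : V → ZMod 3}
    (hc : ∀ T ∈ L, indicator3 T ⬝ᵥ c = 0) (hγ : γ ∈ triangleSpan L) : γ ⬝ᵥ c = 0 := by
  induction hγ using Submodule.span_induction with
  | mem x hx =>
    obtain ⟨T, hT, rfl⟩ := hx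
    exact hc T hT
  | zero => exact zero_dotProduct c
  | add x y _ _ hx hy => rw [add_dotProduct, hx, hy, add_zero]
  | smul t x _ hx => rw [smul_dotProduct, hx, smul_zero]

theorem sum_eq_zero_of_mem_triangleSpan {L : List (V × V × V)} {γ : V → ZMod 3}
    (hγ : γ ∈ triangleSpan L) : ∑ w, γ w = 0 := by
  rw [← dotProduct_one]
  exact dotProduct_eq_zero_of_mem_triangleSpan
    (fun T _ => by rw [dotProduct_one, sum_indicator3]) hγ

theorem exists_not_isExceptional_sub {L : List (V × V × V)} {c : V → ZMod 3}
    (hc : ∀ T ∈ L, indicator3 T ⬝ᵥ c = 0) {a b : V} (hab : c a ≠ c b) (β : V → ZMod 3) :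
    ∃ ε : ZMod 3, ε ≠ 0 ∧ ¬IsExceptional L (β - ε • dipole a b) := by
  by_contra! h
  have h₁ := dotProduct_eq_zero_of_mem_triangleSpan hc (h 1 one_ne_zero).mem_triangleSpan
  have h₂ := dotProduct_eq_zero_of_mem_triangleSpan hc (h (-1) (by decide)).mem_triangleSpan
  rw [sub_dotProduct, smul_dotProduct, dipole_dotProduct] at h₁ h₂
  have key : ∀ p q : ZMod 3, p - (1 : ZMod 3) • q = 0 → p - (-1 : ZMod 3) • q = 0 → q = 0 := by
    decide
  exact hab (sub_eq_zero.1 (key _ _ h₁ h₂))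

end TriangleSpan

namespace Multigraph

variable {G : Multigraph} {S : Set G.V} {F : Set G.E} {L : List (G.V × G.V × G.V)}

variable (G) in
noncomputable def boundaryOn (D : G.E → G.V × G.V) (F : Set G.E) : G.V → ZMod 3 :=
  ∑ e ∈ F.toFinset, dipole (D e).1 (D e).2

variable (G) in
def IsBoundaryOn (F : Set G.E) (β : G.V → ZMod 3) : Prop :=
  ∃ D, G.IsOrientation D ∧ G.boundaryOn D F = β

theorem outDeg_sub_inDeg (D : G.E → G.V × G.V) (v : G.V) :
    (G.outDeg D v : ZMod 3) - G.inDeg D v = G.boundaryOn D Set.univ v := by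
  simp only [outDeg, inDeg, boundaryOn, Set.natCast_ncard_setOf_eq_sum, Set.toFinset_univ,
    Finset.sum_apply, dipole, Pi.sub_apply, Pi.single_apply, Finset.sum_sub_distrib, eq_comm]

theorem z3Connected_iff_forall_isBoundaryOn :
    G.Z3Connected ↔ ∀ β : G.V → ZMod 3, ∑ v, β v = 0 → G.IsBoundaryOn Set.univ β := by
  simp only [Z3Connected, IsBoundaryOn, outDeg_sub_inDeg, funext_iff]

theorem boundaryOn_insert {D : G.E → G.V × G.V} {e : G.E} (he : e ∉ F) :
    G.boundaryOn D (insert e F) = dipole (D e).1 (D e).2 + G.boundaryOn D F := by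
  simp only [boundaryOn, Set.toFinset_insert]
  exact Finset.sum_insert (by simpa using he)

theorem boundaryOn_congr {D D' : G.E → G.V × G.V} (h : ∀ e ∈ F, D e = D' e) :
    G.boundaryOn D F = G.boundaryOn D' F :=
  Finset.sum_congr rfl fun e he => by rw [h e (by simpa using he)]

theorem isBoundaryOn_empty {β : G.V → ZMod 3} : G.IsBoundaryOn ∅ β ↔ β = 0 := by
  refine ⟨fun ⟨D, _, hD⟩ => by simp [← hD, boundaryOn], fun hβ => ?_⟩
  refine ⟨fun e => ((G.ends e).out.1, (G.ends e).out.2), fun e => (Quot.out_eq _).symm, ?_⟩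
  simp [hβ, boundaryOn]

theorem dipole_eq_smul_of_ends {p : G.V × G.V} {e : G.E} {a b : G.V}
    (hp : G.ends e = s(p.1, p.2)) (hab : G.ends e = s(a, b)) :
    ∃ ε : ZMod 3, ε ≠ 0 ∧ dipole p.1 p.2 = ε • dipole a b := by
  rcases Sym2.eq_iff.1 (hp.symm.trans hab) with ⟨h₁, h₂⟩ | ⟨h₁, h₂⟩
  · exact ⟨1, one_ne_zero, by rw [h₁, h₂, one_smul]⟩
  · exact ⟨-1, by decide, by rw [h₁, h₂, dipole_swap, neg_one_smul]⟩

theorem exists_ends_dipole_eq_smul {a b : G.V} {ε : ZMod 3} (hε : ε ≠ 0) :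
    ∃ p : G.V × G.V, s(p.1, p.2) = s(a, b) ∧ dipole p.1 p.2 = ε • dipole a b := by
  rcases zmod3_eq_one_or_eq_neg_one hε with rfl | rfl
  · exact ⟨(a, b), rfl, (one_smul _ _).symm⟩
  · exact ⟨(b, a), Sym2.eq_swap, by rw [dipole_swap, neg_one_smul]⟩

theorem isBoundaryOn_insert {e : G.E} {a b : G.V} {β : G.V → ZMod 3}
    (he : e ∉ F) (hab : G.ends e = s(a, b)) :
    G.IsBoundaryOn (insert e F) β ↔
      ∃ ε : ZMod 3, ε ≠ 0 ∧ G.IsBoundaryOn F (β - ε • dipole a b) := by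
  constructor
  · rintro ⟨D, hD, rfl⟩
    obtain ⟨ε, hε, hDe⟩ := dipole_eq_smul_of_ends (hD e) hab
    exact ⟨ε, hε, D, hD, by rw [boundaryOn_insert he, hDe, add_sub_cancel_left]⟩
  · rintro ⟨ε, hε, D, hD, hDβ⟩
    obtain ⟨p, hp, hpε⟩ := exists_ends_dipole_eq_smul (a := a) (b := b) hε
    refine ⟨Function.update D e p, fun f => ?_, ?_⟩
    · rcases eq_or_ne f e with rfl | hf
      · rw [Function.update_self, hab, hp]
      · rw [Function.update_of_ne hf, hD f]
    · rw [boundaryOn_insert he, Function.update_self, hpε,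
        ← boundaryOn_congr fun f hf =>
          (Function.update_of_ne (ne_of_mem_of_not_mem hf he) _ _).symm, hDβ, add_sub_cancel]

variable (G) in
def IsProperColoringOn {α : Type*} (F : Set G.E) (c : G.V → α) : Prop :=
  ∀ e ∈ F, ∀ x y, G.ends e = s(x, y) → c x ≠ c y

variable (G) in
def IsTriangleOn (F : Set G.E) (T : G.V × G.V × G.V) : Prop :=
  ∃ e₁ ∈ F, ∃ e₂ ∈ F, ∃ e₃ ∈ F,
    G.ends e₁ = s(T.1, T.2.1) ∧ G.ends e₂ = s(T.2.1, T.2.2) ∧ G.ends e₃ = s(T.1, T.2.2)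

theorem IsProperColoringOn.mono {α : Type*} {F' : Set G.E} {c : G.V → α}
    (hc : G.IsProperColoringOn F' c) (h : F ⊆ F') : G.IsProperColoringOn F c :=
  fun e he => hc e (h he)

theorem isProperColoringOn_insert {α : Type*} {e : G.E} {a b : G.V}
    {c : G.V → α} (hab : G.ends e = s(a, b)) :
    G.IsProperColoringOn (insert e F) c ↔ c a ≠ c b ∧ G.IsProperColoringOn F c := by
  refine ⟨fun hc => ⟨hc e (Set.mem_insert _ _) a b hab, hc.mono (Set.subset_insert _ _)⟩,
    fun ⟨hne, hc⟩ f hf x y hxy => ?_⟩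
  rcases Set.mem_insert_iff.1 hf with rfl | hf
  · rcases Sym2.eq_iff.1 (hxy.symm.trans hab) with ⟨rfl, rfl⟩ | ⟨rfl, rfl⟩
    exacts [hne, hne.symm]
  · exact hc f hf x y hxy

theorem isProperColoringOn_comp_iff {α β : Type*} {c : G.V → α} {f : α → β}
    (hf : Function.Injective f) : G.IsProperColoringOn F (f ∘ c) ↔ G.IsProperColoringOn F c :=
  forall₂_congr fun _ _ => forall₃_congr fun _ _ _ => hf.ne_iff

theorem IsTriangleOn.mono {F' : Set G.E} {T : G.V × G.V × G.V} (hT : G.IsTriangleOn F T)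
    (h : F ⊆ F') : G.IsTriangleOn F' T := by
  obtain ⟨e₁, h₁, e₂, h₂, e₃, h₃, hT⟩ := hT
  exact ⟨e₁, h h₁, e₂, h h₂, e₃, h h₃, hT⟩

theorem IsTriangleOn.mem {T : G.V × G.V × G.V}
    (hT : G.IsTriangleOn F T) (hS : G.Subgraph S F) : T.1 ∈ S ∧ T.2.1 ∈ S ∧ T.2.2 ∈ S := by
  obtain ⟨e₁, h₁, e₂, h₂, -, -, he₁, he₂, -⟩ := hT
  exact ⟨hS e₁ h₁ _ (he₁ ▸ Sym2.mem_mk_left _ _), hS e₂ h₂ _ (he₂ ▸ Sym2.mem_mk_left _ _),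
    hS e₂ h₂ _ (he₂ ▸ Sym2.mem_mk_right _ _)⟩

/-- The three colours of a properly coloured triangle are `0, 1, 2`, which sum to `0`. -/
theorem IsTriangleOn.indicator3_dotProduct_eq_zero {T : G.V × G.V × G.V}
    {c : G.V → ZMod 3} (hT : G.IsTriangleOn F T) (hc : G.IsProperColoringOn F c) :
    indicator3 T ⬝ᵥ c = 0 := by
  obtain ⟨e₁, h₁, e₂, h₂, e₃, h₃, he₁, he₂, he₃⟩ := hT
  have key : ∀ x y z : ZMod 3, x ≠ y → y ≠ z → x ≠ z → x + y + z = 0 := by decide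
  rw [indicator3_dotProduct]
  exact key _ _ _ (hc e₁ h₁ _ _ he₁) (hc e₂ h₂ _ _ he₂) (hc e₃ h₃ _ _ he₃)

theorem IsTriangleOn.apply_indicator3_eq_zero {T : G.V × G.V × G.V} (hT : G.IsTriangleOn F T)
    (hS : G.Subgraph S F) {v : G.V} (hv : v ∉ S) : indicator3 T v = 0 := by
  obtain ⟨h₁, h₂, h₃⟩ := hT.mem hS
  exact Function.notMem_support.1 fun h => by
    rcases support_indicator3_subset T h with rfl | rfl | rfl <;> contradiction

variable (G) in
structure IsTriangleDecomposition (S : Set G.V) (F : Set G.E)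
    (L : List (G.V × G.V × G.V)) : Prop where
  subgraph : G.Subgraph S F
  colorable : ∃ c : G.V → ZMod 3, G.IsProperColoringOn F c
  isTriangleOn : ∀ T ∈ L, G.IsTriangleOn F T
  isBoundaryOn_iff : ∀ β : G.V → ZMod 3, ∑ v, β v = 0 →
    (G.IsBoundaryOn F β ↔ Function.support β ⊆ S ∧ ¬IsExceptional L β)
  mem_triangleSpan : ∀ c : G.V → ZMod 3, G.IsProperColoringOn F c → ∀ γ : G.V → ZMod 3,
    ∑ v, γ v = 0 → Function.support γ ⊆ S → γ ⬝ᵥ c = 0 → γ ∈ triangleSpan L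

theorem IsTriangleDecomposition.apply_eq_zero_of_mem_triangleSpan
    (hL : G.IsTriangleDecomposition S F L) {v : G.V} (hv : v ∉ S) {γ : G.V → ZMod 3}
    (hγ : γ ∈ triangleSpan L) : γ v = 0 := by
  have := dotProduct_eq_zero_of_mem_triangleSpan (c := Pi.single v 1) (fun T hT => by
    rw [dotProduct_single, (hL.isTriangleOn T hT).apply_indicator3_eq_zero hL.subgraph hv,
      zero_mul]) hγ
  rwa [dotProduct_single, mul_one] at this

theorem isTriangleDecomposition_edge {x z : G.V} {e : G.E} (hxz : x ≠ z)
    (he : G.ends e = s(x, z)) : G.IsTriangleDecomposition {x, z} {e} [] where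
  subgraph f hf w hw := by
    rw [Set.mem_singleton_iff.1 hf, he, Sym2.mem_iff] at hw
    rcases hw with rfl | rfl <;> simp
  colorable := ⟨Pi.single x 1, by
    rw [← insert_empty_eq, isProperColoringOn_insert he]
    exact ⟨by simp [hxz.symm], fun f hf => absurd hf (Set.notMem_empty f)⟩⟩
  isTriangleOn := by simp
  isBoundaryOn_iff β hβ := by
    rw [← insert_empty_eq, isBoundaryOn_insert (Set.notMem_empty e) he]
    simp only [isBoundaryOn_empty, sub_eq_zero]
    change _ ↔ _ ∧ ¬β = 0
    constructor
    · rintro ⟨ε, hε, rfl⟩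
      refine ⟨(Function.support_const_smul_subset _ _).trans (support_dipole_subset x z),
        fun h => hε ?_⟩
      simpa [dipole, hxz] using congr_fun h x
    · rintro ⟨hsupp, hne⟩
      have hβ' := eq_smul_dipole_of_support_subset hxz hsupp hβ
      exact ⟨β x, fun h => hne (by rw [hβ', h, zero_smul]), hβ'⟩
  mem_triangleSpan c hc γ hγ hsupp hγc := by
    have hγ' := eq_smul_dipole_of_support_subset hxz hsupp hγ
    rw [hγ', smul_dotProduct, dipole_dotProduct, smul_eq_mul, mul_eq_zero, sub_eq_zero] at hγc
    rw [hγ', hγc.resolve_right (hc e rfl x z he), zero_smul]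
    exact zero_mem _

theorem IsTriangleDecomposition.isExceptional_cons_iff (hL : G.IsTriangleDecomposition S F L)
    {v a b : G.V} (hv : v ∉ S) (hav : a ≠ v) (hbv : b ≠ v) {β : G.V → ZMod 3} :
    IsExceptional ((a, b, v) :: L) β ↔
      β v ≠ 0 ∧ IsExceptional L (β - β v • indicator3 (a, b, v)) := by
  refine ⟨fun ⟨ε, hε, h⟩ => ?_, fun ⟨h0, h⟩ => ⟨β v, h0, h⟩⟩
  have hε' : β v = ε := by
    simpa [indicator3_apply_of_ne hav hbv, sub_eq_zero] using
      hL.apply_eq_zero_of_mem_triangleSpan hv h.mem_triangleSpan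
  exact ⟨hε' ▸ hε, hε' ▸ h⟩

theorem IsTriangleDecomposition.isBoundaryOn_insert_insert_iff
    (hL : G.IsTriangleDecomposition S F L) {v a b : G.V} (hv : v ∉ S) (ha : a ∈ S) (hb : b ∈ S)
    {e e₁ e₂ : G.E} (he : e ∈ F) (hab : G.ends e = s(a, b)) (h₁ : G.ends e₁ = s(v, a))
    (h₂ : G.ends e₂ = s(v, b)) (he₁ : e₁ ∉ insert e₂ F) (he₂ : e₂ ∉ F)
    {β : G.V → ZMod 3} (hβ : ∑ w, β w = 0) :
    G.IsBoundaryOn (insert e₁ (insert e₂ F)) β ↔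
      Function.support β ⊆ insert v S ∧ ¬IsExceptional ((a, b, v) :: L) β := by
  have hav : v ≠ a := fun h => hv (h ▸ ha)
  have hbv : v ≠ b := fun h => hv (h ▸ hb)
  have hF : ∀ ε₁ ε₂ : ZMod 3, G.IsBoundaryOn F (β - ε₁ • dipole v a - ε₂ • dipole v b) ↔
      Function.support β ⊆ insert v S ∧ β v = ε₁ + ε₂ ∧
        ¬IsExceptional L (β - (ε₁ • dipole v a + ε₂ • dipole v b)) := by
    intro ε₁ ε₂
    rw [hL.isBoundaryOn_iff _ (by simp [Finset.sum_sub_distrib, ← Finset.mul_sum, hβ,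
      sum_dipole]), sub_sub, support_sub_subset_iff hv, and_assoc]
    · simp [dipole, hav, hbv]
    · refine Function.support_subset_iff'.2 fun w hw => ?_
      simp only [Set.mem_insert_iff, not_or] at hw
      simp [dipole, hw.1, ne_of_mem_of_not_mem ha hw.2 |>.symm,
        ne_of_mem_of_not_mem hb hw.2 |>.symm]
  rw [isBoundaryOn_insert he₁ h₁]
  simp only [isBoundaryOn_insert he₂ h₂, hF, hL.isExceptional_cons_iff hv hav.symm hbv.symm]
  by_cases hβv : β v = 0
  · obtain ⟨c, hc⟩ := hL.colorable
    simp only [hβv, ne_eq, not_true, false_and, not_false_eq_true, and_true]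
    refine ⟨fun ⟨_, _, _, _, hs, _⟩ => hs, fun hs => ?_⟩
    obtain ⟨ε, hε, hne⟩ := exists_not_isExceptional_sub
      (fun T hT => (hL.isTriangleOn T hT).indicator3_dotProduct_eq_zero hc)
      (hc e he a b hab).symm β
    refine ⟨ε, hε, -ε, neg_ne_zero.2 hε, hs, (add_neg_cancel ε).symm, ?_⟩
    rwa [smul_dipole_add_neg_smul_dipole]
  · -- `β v ≠ 0` forces both new edges to point the same way at `v`
    have key : ∀ x ε₁ ε₂ : ZMod 3, x ≠ 0 → ε₁ ≠ 0 → ε₂ ≠ 0 → x = ε₁ + ε₂ →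
        ε₁ = -x ∧ ε₂ = -x := by decide
    have h2 : ∀ x : ZMod 3, x = -x + -x := by decide
    have hχ : (-β v) • dipole v a + (-β v) • dipole v b = β v • indicator3 (a, b, v) := by
      rw [← smul_add, ← neg_dipole_add_dipole, smul_neg, neg_smul]
    simp only [hβv, ne_eq, not_false_eq_true, true_and]
    constructor
    · rintro ⟨ε₁, hε₁, ε₂, hε₂, hs, hsum, hne⟩
      obtain ⟨rfl, rfl⟩ := key _ _ _ hβv hε₁ hε₂ hsum
      exact ⟨hs, by rwa [hχ] at hne⟩
    · rintro ⟨hs, hne⟩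
      exact ⟨-β v, neg_ne_zero.2 hβv, -β v, neg_ne_zero.2 hβv, hs, h2 _, by rwa [hχ]⟩

theorem IsProperColoringOn.exists_extend {c : G.V → ZMod 3} (hc : G.IsProperColoringOn F c)
    (hS : G.Subgraph S F) {v a b : G.V} (hv : v ∉ S) (ha : a ∈ S) (hb : b ∈ S) (hab : c a ≠ c b)
    {e₁ e₂ : G.E} (h₁ : G.ends e₁ = s(v, a)) (h₂ : G.ends e₂ = s(v, b)) :
    ∃ c' : G.V → ZMod 3, G.IsProperColoringOn (insert e₁ (insert e₂ F)) c' := by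
  have key : ∀ p q : ZMod 3, p ≠ q → -(p + q) ≠ p ∧ -(p + q) ≠ q := by decide
  have hS' : ∀ {f x y}, f ∈ F → G.ends f = s(x, y) → x ≠ v :=
    fun hf hxy => ne_of_mem_of_not_mem (hS _ hf _ (hxy ▸ Sym2.mem_mk_left _ _)) hv
  refine ⟨Function.update c v (-(c a + c b)), ?_⟩
  rw [isProperColoringOn_insert h₁, isProperColoringOn_insert h₂, Function.update_self,
    Function.update_of_ne (ne_of_mem_of_not_mem ha hv),
    Function.update_of_ne (ne_of_mem_of_not_mem hb hv)]
  refine ⟨(key _ _ hab).1, (key _ _ hab).2, fun f hf x y hxy => ?_⟩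
  rw [Function.update_of_ne (hS' hf hxy), Function.update_of_ne (hS' hf (hxy.trans Sym2.eq_swap))]
  exact hc f hf x y hxy

theorem IsTriangleDecomposition.grow (hL : G.IsTriangleDecomposition S F L) {v a b : G.V}
    (hv : v ∉ S) {e e₁ e₂ : G.E} (he : e ∈ F) (hab : G.ends e = s(a, b))
    (h₁ : G.ends e₁ = s(v, a)) (h₂ : G.ends e₂ = s(v, b)) :
    G.IsTriangleDecomposition (insert v S) (insert e₁ (insert e₂ F)) ((a, b, v) :: L) := by
  have ha : a ∈ S := hL.subgraph e he a (hab ▸ Sym2.mem_mk_left a b)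
  have hb : b ∈ S := hL.subgraph e he b (hab ▸ Sym2.mem_mk_right a b)
  have hnotin : ∀ {f x}, G.ends f = s(v, x) → f ∉ F :=
    fun hf hfF => hv (hL.subgraph _ hfF v (hf ▸ Sym2.mem_mk_left _ _))
  have he₂ : e₂ ∉ F := hnotin h₂
  have he₁ : e₁ ∉ insert e₂ F := by
    refine fun h => (Set.mem_insert_iff.1 h).elim (fun h => G.loopless e ?_) (hnotin h₁)
    rw [hab, Sym2.mk_isDiag_iff]
    exact Sym2.congr_right.1 (h₁.symm.trans (h ▸ h₂))
  have hsub : F ⊆ insert e₁ (insert e₂ F) := (Set.subset_insert _ _).trans (Set.subset_insert _ _)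
  have hT : G.IsTriangleOn (insert e₁ (insert e₂ F)) (a, b, v) :=
    ⟨e, by simp [he], e₂, by simp, e₁, by simp, hab, h₂.trans Sym2.eq_swap, h₁.trans Sym2.eq_swap⟩
  refine ⟨?_, ?_, ?_,
    fun β hβ => hL.isBoundaryOn_insert_insert_iff hv ha hb he hab h₁ h₂ he₁ he₂ hβ,
    fun c hc γ hγ hsupp hγc => ?_⟩
  · intro f hf w hw
    rcases hf with rfl | rfl | hf
    · rw [h₁, Sym2.mem_iff] at hw
      rcases hw with rfl | rfl
      exacts [Set.mem_insert _ _, Set.mem_insert_of_mem _ ha]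
    · rw [h₂, Sym2.mem_iff] at hw
      rcases hw with rfl | rfl
      exacts [Set.mem_insert _ _, Set.mem_insert_of_mem _ hb]
    · exact Set.mem_insert_of_mem _ (hL.subgraph f hf w hw)
  · obtain ⟨c, hc⟩ := hL.colorable
    exact hc.exists_extend hL.subgraph hv ha hb (hc e he a b hab) h₁ h₂
  · intro T hT'
    rcases List.mem_cons.1 hT' with rfl | hT'
    · exact hT
    · exact (hL.isTriangleOn T hT').mono hsub
  · refine mem_triangleSpan_cons.2 ⟨γ v, hL.mem_triangleSpan c (hc.mono hsub) _ ?_ ?_ ?_⟩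
    · simp [Finset.sum_sub_distrib, ← Finset.mul_sum, hγ, sum_indicator3]
    · refine (support_sub_subset_iff hv ((Function.support_const_smul_subset _ _).trans
        ((support_indicator3_subset _).trans ?_))).2 ⟨hsupp, ?_⟩
      · simp [Set.insert_subset_iff, ha, hb]
      · rw [Pi.smul_apply, indicator3_apply_of_ne (ne_of_mem_of_not_mem ha hv)
          (ne_of_mem_of_not_mem hb hv), smul_eq_mul, mul_one]
    · rw [sub_dotProduct, smul_dotProduct, hT.indicator3_dotProduct_eq_zero hc, hγc, smul_zero,
        sub_zero]

theorem IsTriangleTree.exists_isTriangleDecomposition (h : G.IsTriangleTree S F) :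
    ∃ L, G.IsTriangleDecomposition S F L := by
  induction h with
  | base x y z e₁ e₂ e₃ hxy hxz hyz h₁ h₂ h₃ =>
    have hL := (isTriangleDecomposition_edge hxz h₃).grow (v := y) (by simp [hxy.symm, hyz])
      rfl h₃ (h₁.trans Sym2.eq_swap) h₂
    rw [Set.insert_comm] at hL
    exact ⟨_, hL⟩
  | grow S F _ v a b hv e he hab e₁ e₂ h₁ h₂ ih =>
    obtain ⟨L, hL⟩ := ih
    exact ⟨_, hL.grow hv he hab h₁ h₂⟩

theorem IsTriangleDecomposition.z3Connected_iff
    (hL : G.IsTriangleDecomposition Set.univ F L) {e₀ : G.E} {u v : G.V} (he₀ : e₀ ∉ F)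
    (hends : G.ends e₀ = s(u, v)) (huniv : insert e₀ F = Set.univ) {c : G.V → ZMod 3}
    (hc : G.IsProperColoringOn F c) : G.Z3Connected ↔ c u ≠ c v := by
  have hcL : ∀ T ∈ L, indicator3 T ⬝ᵥ c = 0 :=
    fun T hT => (hL.isTriangleOn T hT).indicator3_dotProduct_eq_zero hc
  have key : ∀ β : G.V → ZMod 3, ∑ w, β w = 0 → (G.IsBoundaryOn Set.univ β ↔
      ∃ ε : ZMod 3, ε ≠ 0 ∧ ¬IsExceptional L (β - ε • dipole u v)) := fun β hβ => by
    rw [← huniv, isBoundaryOn_insert he₀ hends]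
    refine exists_congr fun ε => and_congr_right fun _ => ?_
    rw [hL.isBoundaryOn_iff _ (by simp [Finset.sum_sub_distrib, ← Finset.mul_sum, hβ,
      sum_dipole])]
    simp
  rw [z3Connected_iff_forall_isBoundaryOn]
  refine ⟨fun h hcuv => ?_,
    fun hcuv β hβ => (key β hβ).2 (exists_not_isExceptional_sub hcL hcuv β)⟩
  obtain ⟨β, h₁, h₂⟩ := exists_isExceptional_sub_add <| hL.mem_triangleSpan c hc _
    (sum_dipole u v) (Set.subset_univ _) (by rw [dipole_dotProduct, hcuv, sub_self])
  have hβ : ∑ w, β w = 0 := by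
    simpa [Finset.sum_sub_distrib, sum_dipole] using
      sum_eq_zero_of_mem_triangleSpan h₁.mem_triangleSpan
  obtain ⟨ε, hε, hne⟩ := (key β hβ).1 (h β hβ)
  rcases zmod3_eq_one_or_eq_neg_one hε with rfl | rfl
  · exact hne (by rwa [one_smul])
  · exact hne (by rwa [neg_one_smul, sub_neg_eq_add])

end Multigraph

open Multigraph in
/-- A crystal is `Z3`-connected iff it admits a proper vertex
3-coloring. -/
theorem stmt_5 (G : Multigraph) (hG : G.IsCrystal) :
    G.Z3Connected ↔
      ∃ c : G.V → Fin 3, ∀ (e : G.E) (x y : G.V), G.ends e = s(x, y) → c x ≠ c y := by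
  obtain ⟨F, u, v, e₀, ⟨hT, -⟩, -, -, -, he₀, hends, huniv⟩ := hG
  obtain ⟨L, hL⟩ := hT.exists_isTriangleDecomposition
  have hproper : ∀ c : G.V → ZMod 3,
      G.IsProperColoringOn Set.univ c ↔ G.IsProperColoringOn F c ∧ c u ≠ c v := fun c => by
    rw [← huniv, isProperColoringOn_insert hends, and_comm]
  constructor
  · intro hZ
    obtain ⟨c₀, hc₀⟩ := hL.colorable
    have hc : G.IsProperColoringOn Set.univ c₀ :=
      (hproper c₀).2 ⟨hc₀, (hL.z3Connected_iff he₀ hends huniv hc₀).1 hZ⟩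
    refine ⟨(ZMod.finEquiv 3).symm ∘ c₀, fun e => ?_⟩
    exact (isProperColoringOn_comp_iff (ZMod.finEquiv 3).symm.injective).2 hc e trivial
  · rintro ⟨c, hc⟩
    obtain ⟨hcF, hcuv⟩ := (hproper _).1
      ((isProperColoringOn_comp_iff (ZMod.finEquiv 3).injective).2 fun e _ => hc e)
    exact (hL.z3Connected_iff he₀ hends huniv hcF).2 hcuv
end

section
/- Let P be a path from u to v in a graph G. If the graph obtained from G by deleting all edges of P and adding a new edge uv is Z3-connected, then G is Z3-connected. -/
open scoped Classical

/-!
Orient the edges of the path `P` all in the direction that the new edge `uv` receives in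
an orientation of `G − E(P) + uv` realising a given boundary. The oriented path then
contributes `+1` at its first vertex, `-1` at its last vertex and `0` at each inner vertex
(the sum telescopes), exactly like the single arc it replaces, so together with the
orientation of the remaining edges it realises the same boundary in `G`.
-/

namespace Multigraph

section arcBoundary

variable {V : Type*} [DecidableEq V]

def arcBoundary (a : V × V) (x : V) : ZMod 3 :=
  (if a.1 = x then 1 else 0) - (if a.2 = x then 1 else 0)

lemma arcBoundary_swap (a : V × V) (x : V) :
    arcBoundary a.swap x = -arcBoundary a x := by
  simp only [arcBoundary, Prod.fst_swap, Prod.snd_swap, neg_sub]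

lemma arcBoundary_prodMap {W : Type*} [DecidableEq W] (f : V ≃ W)
    (a : V × V) (x : W) : arcBoundary (Prod.map f f a) x = arcBoundary a (f.symm x) := by
  simp only [arcBoundary, Prod.map_fst, Prod.map_snd, Equiv.eq_symm_apply]

lemma sum_range_arcBoundary_getD (l : List V) (d x : V) (n : ℕ) :
    ∑ i ∈ Finset.range n, arcBoundary (l.getD i d, l.getD (i + 1) d) x =
      arcBoundary (l.getD 0 d, l.getD n d) x :=
  Finset.sum_range_sub' (fun i => if l.getD i d = x then (1 : ZMod 3) else 0) n

end arcBoundary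

lemma outDeg_sub_inDeg_s6 (G : Multigraph) (D : G.E → G.V × G.V) (x : G.V) :
    (G.outDeg D x : ZMod 3) - G.inDeg D x = ∑ e, arcBoundary (D e) x := by
  simp only [outDeg, inDeg, arcBoundary, Finset.sum_sub_distrib, Set.ncard_eq_toFinset_card',
    Set.toFinset_ofPred, Finset.card_filter, Nat.cast_sum, Nat.cast_ite, Nat.cast_one,
    Nat.cast_zero]

def SimulatesArc (G : Multigraph) (X : Set G.E) (D : G.E → G.V × G.V) (a : G.V × G.V) :
    Prop :=
  (∀ e ∈ X, G.ends e = s((D e).1, (D e).2)) ∧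
    ∀ x, ∑ e : X, arcBoundary (D e) x = arcBoundary a x

lemma SimulatesArc.swap {G : Multigraph} {X : Set G.E} {D : G.E → G.V × G.V}
    {a : G.V × G.V} (h : G.SimulatesArc X D a) : G.SimulatesArc X (Prod.swap ∘ D) a.swap := by
  refine ⟨fun e he => (h.1 e he).trans Sym2.eq_swap, fun x => ?_⟩
  simp only [Function.comp_apply, arcBoundary_swap, Finset.sum_neg_distrib, h.2 x]

lemma IsPath.simulatesArc {G : Multigraph} {u v : G.V} {vs : List G.V} {es : List G.E}
    (hP : G.IsPath u v vs es) :
    G.SimulatesArc {e | e ∈ es}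
      (fun e => (vs.getD (es.idxOf e) u, vs.getD (es.idxOf e + 1) u)) (u, v) := by
  obtain ⟨-, hnd, hhead, hlast, hlen, hends⟩ := hP
  refine ⟨fun e he => ?_, fun x => ?_⟩
  · have hi : es.idxOf e < es.length := List.idxOf_lt_length_iff.2 he
    have h := hends _ hi (by omega) (by omega)
    simp only [List.get_eq_getElem, List.getElem_idxOf hi] at h
    simp only [List.getD_eq_getElem?_getD, Option.getD_some, h,
      List.getElem?_eq_getElem (by omega : es.idxOf e < vs.length),
      List.getElem?_eq_getElem (by omega : es.idxOf e + 1 < vs.length)]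
  · have hu : vs.getD 0 u = u := by
      rw [List.getD_eq_getElem?_getD, ← List.head?_eq_getElem?, hhead, Option.getD_some]
    have hv : vs.getD es.length u = v := by
      rw [List.getD_eq_getElem?_getD, show es.length = vs.length - 1 by omega,
        ← List.getLast?_eq_getElem?, hlast, Option.getD_some]
    have htele := sum_range_arcBoundary_getD vs u x es.length
    rw [hu, hv, ← Fin.sum_univ_eq_sum_range] at htele
    rw [← htele]
    have hidx (i : Fin es.length) : es.idxOf (hnd.getEquiv es i : G.E) = i := by
      simp [List.Nodup.getEquiv, hnd.idxOf_getElem]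
    -- `convert`, because the two `Fintype` instances on the subtype of `es` differ
    convert (Fintype.sum_equiv (hnd.getEquiv es)
      (fun i : Fin es.length => arcBoundary (vs.getD i u, vs.getD (i + 1) u) x)
      (fun e : {e // e ∈ es} =>
        arcBoundary (vs.getD (es.idxOf e.1) u, vs.getD (es.idxOf e.1 + 1) u) x)
      fun i => by rw [hidx]).symm using 2
    exact congrArg _ (Subsingleton.elim _ _)

theorem Z3Connected.of_isDeleteAddEdge {G G' : Multigraph} {X : Set G.E} {u v : G.V}
    (hmod : G.IsDeleteAddEdge X s(u, v) G') (hZ3 : G'.Z3Connected)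
    (hX : ∀ a : G.V × G.V, s(a.1, a.2) = s(u, v) → ∃ D, G.SimulatesArc X D a) :
    G.Z3Connected := by
  obtain ⟨φ, e0, he0, ψ, hψ, hψrange, hψends⟩ := hmod
  intro β hβ
  obtain ⟨D', hD', hβ'⟩ := hZ3 (β ∘ φ.symm) (by rw [← hβ]; exact φ.symm.sum_comp β)
  let pull : G'.V × G'.V → G.V × G.V := Prod.map φ.symm φ.symm
  have hpull (p : Sym2 G.V) (e' : G'.E) (he : G'.ends e' = Sym2.map φ p) :
      p = s((pull (D' e')).1, (pull (D' e')).2) := by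
    have := congrArg (Sym2.map φ.symm) ((hD' e').symm.trans he)
    simpa [Sym2.map_map, pull] using this.symm
  obtain ⟨DX, hDX, hDXsum⟩ := hX (pull (D' e0)) (hpull _ _ he0).symm
  let D : G.E → G.V × G.V := fun e => if h : e ∈ X then DX e else pull (D' (ψ ⟨e, h⟩))
  refine ⟨D, fun e => ?_, fun x => ?_⟩
  · by_cases h : e ∈ X
    · simpa [D, h] using hDX e h
    · simpa [D, h] using hpull _ _ (hψends ⟨e, h⟩)
  · have hpath : ∑ e : X, arcBoundary (D e) x = arcBoundary (D' e0) (φ x) := by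
      simp [D, hDXsum, pull, arcBoundary_prodMap]
    have hψne (e : {e // e ∉ X}) : ψ e ≠ e0 := by
      have : ψ e ∈ Set.range ψ := Set.mem_range_self e
      rwa [hψrange] at this
    have hrest : ∑ e : {e // e ∉ X}, arcBoundary (D e) x =
        ∑ e' : {e' // e' ≠ e0}, arcBoundary (D' e') (φ x) := by
      refine Fintype.sum_bijective (fun e => ⟨ψ e, hψne e⟩)
        ⟨fun e₁ e₂ h => hψ (congrArg Subtype.val h), fun e' => ?_⟩ _ _ fun e => ?_
      · obtain ⟨e, he⟩ : e'.1 ∈ Set.range ψ := hψrange ▸ e'.2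
        exact ⟨e, Subtype.ext he⟩
      · simp [D, e.2, pull, arcBoundary_prodMap]
    rw [outDeg_sub_inDeg_s6, ← Fintype.sum_subtype_add_sum_subtype (· ∈ X), hpath, hrest,
      ← Fintype.sum_eq_add_sum_subtype_ne (fun e' => arcBoundary (D' e') (φ x)) e0,
      ← outDeg_sub_inDeg_s6, hβ' (φ x), Function.comp_apply, Equiv.symm_apply_apply]

end Multigraph

theorem stmt_6_general (G G' : Multigraph) (u v : G.V) (vs : List G.V) (es : List G.E)
    (hP : G.IsPath u v vs es)
    (hmod : G.IsDeleteAddEdge {e : G.E | e ∈ es} s(u, v) G')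
    (hZ3 : G'.Z3Connected) :
    G.Z3Connected := by
  refine hZ3.of_isDeleteAddEdge hmod fun ⟨a, b⟩ hab => ?_
  rcases Sym2.eq_iff.1 hab with ⟨rfl, rfl⟩ | ⟨rfl, rfl⟩
  · exact ⟨_, hP.simulatesArc⟩
  · exact ⟨_, hP.simulatesArc.swap⟩

/-- Let `P` be a path from `u` to `v` in `G`. If `G − E(P) + uv` is
`Z3`-connected, then so is `G`. -/
theorem stmt_6 (G G' : Multigraph) (u v : G.V) (vs : List G.V) (es : List G.E)
    (huv : u ≠ v) (hP : G.IsPath u v vs es)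
    (hmod : G.IsDeleteAddEdge {e : G.E | e ∈ es} s(u, v) G')
    (hZ3 : G'.Z3Connected) :
    G.Z3Connected :=
  stmt_6_general G G' u v vs es hP hmod hZ3
end

section
/- Let T = T(x1, x2, …, xn) be a triangle-tree in which the vertex x1 is a leaf. Then for any indices j, k > 1, the graph T + x1xj + x1xk obtained from T by adding the two edges x1xj and x1xk (parallel edges allowed) is Z3-connected. -/
open scoped Classical

section Stmt7Aux

open Multigraph

namespace S7

lemma three0 : (3 : ZMod 3) = 0 := by decide

lemma zmod3cases (x : ZMod 3) : x = 0 ∨ x = 1 ∨ x = 2 := by revert x; decide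

noncomputable def ind {α : Type} (x w : α) : ZMod 3 := if x = w then 1 else 0

lemma ind_self {α : Type} (x : α) : ind x x = 1 := if_pos rfl

lemma ind_ne {α : Type} {x w : α} (h : x ≠ w) : ind x w = 0 := if_neg h

lemma sum_ind {α : Type} [Fintype α] (x : α) : (∑ w : α, ind x w) = 1 := by
  simp [ind]

/-- characteristic vector of a triangle -/
noncomputable def chiT {α : Type} (Δ : α × α × α) (w : α) : ZMod 3 :=
  ind Δ.1 w + ind Δ.2.1 w + ind Δ.2.2 w

/-- linear combination of triangle vectors with coefficients `t` -/
noncomputable def combo {α : Type} : List (α × α × α) → (ℕ → ZMod 3) → α → ZMod 3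
  | [], _, _ => 0
  | Δ :: L, t, w => t 0 * chiT Δ w + combo L (fun i => t (i + 1)) w

lemma combo_congr {α : Type} (L : List (α × α × α)) {s t : ℕ → ZMod 3}
    (h : ∀ i, i < L.length → s i = t i) (w : α) : combo L s w = combo L t w := by
  induction L generalizing s t with
  | nil => rfl
  | cons Δ L ih =>
      simp only [combo]
      rw [h 0 (by simp), ih (fun i hi => h (i+1) (by simpa using Nat.succ_lt_succ hi))]

lemma combo_sub {α : Type} (L : List (α × α × α)) (s t : ℕ → ZMod 3) (w : α) :
    combo L (fun i => s i - t i) w = combo L s w - combo L t w := by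
  induction L generalizing s t with
  | nil => simp [combo]
  | cons Δ L ih =>
      simp only [combo]
      rw [ih (fun i => s (i+1)) (fun i => t (i+1))]
      ring

lemma chiT_zero {α : Type} {Δ : α × α × α} {w : α}
    (h1 : Δ.1 ≠ w) (h2 : Δ.2.1 ≠ w) (h3 : Δ.2.2 ≠ w) : chiT Δ w = 0 := by
  simp [chiT, ind_ne h1, ind_ne h2, ind_ne h3]

lemma combo_zero {α : Type} (L : List (α × α × α)) (t : ℕ → ZMod 3) (w : α)
    (h : ∀ Δ ∈ L, chiT Δ w = 0) : combo L t w = 0 := by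
  induction L generalizing t with
  | nil => rfl
  | cons Δ L ih =>
      simp only [combo]
      rw [h Δ (by simp), ih _ (fun Δ' hΔ' => h Δ' (by simp [hΔ']))]
      ring

/-- contribution of an oriented edge to the boundary at `v` -/
noncomputable def ctrb {α : Type} (p : α × α) (v : α) : ZMod 3 := ind p.1 v - ind p.2 v

variable {G : Multigraph}

/-- net flow at `v` counted over the edge set `F` -/
noncomputable def netf (G : Multigraph) (F : Set G.E) (D : G.E → G.V × G.V) (v : G.V) :
    ZMod 3 :=
  ∑ e : G.E, F.indicator (fun e => ctrb (D e) v) e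

lemma exists_orient (G : Multigraph) (e : G.E) :
    ∃ p : G.V × G.V, G.ends e = s(p.1, p.2) := by
  obtain ⟨⟨x, y⟩, h⟩ := Quot.exists_rep (G.ends e)
  exact ⟨(x, y), h.symm⟩

noncomputable def dflt (G : Multigraph) : G.E → G.V × G.V :=
  fun e => Classical.choose (exists_orient G e)

lemma dflt_spec (G : Multigraph) (e : G.E) : G.ends e = s((dflt G e).1, (dflt G e).2) :=
  Classical.choose_spec (exists_orient G e)

lemma orient_mul (e : G.E) (x y : G.V) (he : G.ends e = s(x, y)) (f : ZMod 3)
    (hf : f ≠ 0) :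
    ∃ p : G.V × G.V, G.ends e = s(p.1, p.2) ∧
      ∀ v, ctrb p v = f * (ind x v - ind y v) := by
  rcases zmod3cases f with h | h | h
  · exact absurd h hf
  · subst h
    exact ⟨(x, y), he, fun v => by simp [ctrb]⟩
  · subst h
    refine ⟨(y, x), by rw [he, Sym2.eq_swap], fun v => ?_⟩
    show ind y v - ind x v = 2 * (ind x v - ind y v)
    linear_combination (ind y v - ind x v) * three0

lemma netf_congr {F : Set G.E} {D D' : G.E → G.V × G.V}
    (h : ∀ e ∈ F, D e = D' e) (v : G.V) : netf G F D v = netf G F D' v := by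
  unfold netf
  refine Finset.sum_congr rfl fun e _ => ?_
  by_cases he : e ∈ F
  · rw [Set.indicator_of_mem he, Set.indicator_of_mem he, h e he]
  · rw [Set.indicator_of_notMem he, Set.indicator_of_notMem he]

lemma netf_insert {F : Set G.E} {e0 : G.E} (h : e0 ∉ F) (D : G.E → G.V × G.V) (v : G.V) :
    netf G (insert e0 F) D v = ctrb (D e0) v + netf G F D v := by
  unfold netf
  have key : ∀ e : G.E, (insert e0 F).indicator (fun e => ctrb (D e) v) e
      = (if e = e0 then ctrb (D e) v else 0)
          + F.indicator (fun e => ctrb (D e) v) e := by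
    intro e
    by_cases h1 : e = e0
    · subst h1
      rw [Set.indicator_of_mem (Set.mem_insert _ _), if_pos rfl,
        Set.indicator_of_notMem h, add_zero]
    · by_cases h2 : e ∈ F
      · rw [Set.indicator_of_mem (Set.mem_insert_of_mem _ h2), if_neg h1,
          Set.indicator_of_mem h2, zero_add]
      · rw [Set.indicator_of_notMem
            (fun hm => by rcases Set.mem_insert_iff.1 hm with hm | hm <;> tauto),
          if_neg h1, Set.indicator_of_notMem h2, add_zero]
  rw [Finset.sum_congr rfl fun e _ => key e, Finset.sum_add_distrib]
  congr 1
  simp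

lemma netf_empty (D : G.E → G.V × G.V) (v : G.V) :
    netf G (∅ : Set G.E) D v = 0 := by
  unfold netf
  simp

lemma netf_univ (D : G.E → G.V × G.V) (v : G.V) :
    netf G (Set.univ : Set G.E) D v = ∑ e : G.E, ctrb (D e) v := by
  unfold netf
  simp

lemma deg_sub (D : G.E → G.V × G.V) (v : G.V) :
    ((G.outDeg D v : ZMod 3) - (G.inDeg D v : ZMod 3)) = ∑ e : G.E, ctrb (D e) v := by
  have key : ∀ p : G.E → Prop, {e : G.E | p e}.ncard = ∑ e : G.E, if p e then (1 : ℕ) else 0 := by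
    intro p
    rw [Set.ncard_eq_toFinset_card', Set.toFinset_setOf, Finset.card_filter]
  have h1 : G.outDeg D v = ∑ e : G.E, if (D e).1 = v then (1 : ℕ) else 0 :=
    key fun e => (D e).1 = v
  have h2 : G.inDeg D v = ∑ e : G.E, if (D e).2 = v then (1 : ℕ) else 0 :=
    key fun e => (D e).2 = v
  rw [h1, h2]
  push_cast
  rw [← Finset.sum_sub_distrib]
  refine Finset.sum_congr rfl fun e _ => ?_
  simp [ctrb, ind]

end S7

end Stmt7Aux

namespace S7

variable {G : Multigraph}

/-- Explicit build data for a triangle-tree: the list records, most recent first,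
the triangles `(v, a, b)` used in the construction. -/
inductive MyBuild (G : Multigraph) : Set G.V → Set G.E → List (G.V × G.V × G.V) → Prop
  | base (x y z : G.V) (e1 e2 e3 : G.E) (hxy : x ≠ y) (hxz : x ≠ z) (hyz : y ≠ z)
      (h1 : G.ends e1 = s(x, y)) (h2 : G.ends e2 = s(y, z)) (h3 : G.ends e3 = s(x, z)) :
      MyBuild G {x, y, z} {e1, e2, e3} [(x, y, z)]
  | grow (S : Set G.V) (F : Set G.E) (L : List (G.V × G.V × G.V))
      (hT : MyBuild G S F L) (v a b : G.V) (hv : v ∉ S) (ha : a ∈ S) (hb : b ∈ S)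
      (hab : a ≠ b) (hedge : ∃ e ∈ F, G.ends e = s(a, b))
      (e1 e2 : G.E) (h1 : G.ends e1 = s(v, a)) (h2 : G.ends e2 = s(v, b)) :
      MyBuild G (insert v S) (insert e1 (insert e2 F)) ((v, a, b) :: L)

lemma tt_sub {S : Set G.V} {F : Set G.E} (h : G.IsTriangleTree S F) :
    ∀ e ∈ F, ∀ w, w ∈ G.ends e → w ∈ S := by
  induction h with
  | base x y z e1 e2 e3 hxy hxz hyz h1 h2 h3 =>
      intro e he w hw
      rcases he with he | he | he <;> subst he <;>
        [rw [h1] at hw; rw [h2] at hw; rw [h3] at hw] <;>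
        rcases Sym2.mem_iff.1 hw with h' | h' <;> subst h' <;> simp
  | grow S F hT v a b hv e he hab e1 e2 h1 h2 ih =>
      intro e' he' w hw
      rcases he' with he' | he' | he'
      · subst he'; rw [h1] at hw
        rcases Sym2.mem_iff.1 hw with h' | h'
        · subst h'; exact Set.mem_insert _ _
        · rw [h']
          refine Set.mem_insert_of_mem _ (ih e he a ?_)
          rw [hab]; simp
      · subst he'; rw [h2] at hw
        rcases Sym2.mem_iff.1 hw with h' | h'
        · subst h'; exact Set.mem_insert _ _
        · rw [h']
          refine Set.mem_insert_of_mem _ (ih e he b ?_)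
          rw [hab]; simp
      · exact Set.mem_insert_of_mem _ (ih e' he' w hw)

lemma ends_ne {e : G.E} {a b : G.V} (h : G.ends e = s(a, b)) : a ≠ b := by
  intro hab
  exact G.loopless e (by rw [h, hab]; exact Sym2.mk_isDiag_iff.2 rfl)

/-- every triangle-tree admits build data -/
lemma tt_build {S : Set G.V} {F : Set G.E} (h : G.IsTriangleTree S F) :
    ∃ L, MyBuild G S F L := by
  induction h with
  | base x y z e1 e2 e3 hxy hxz hyz h1 h2 h3 =>
      exact ⟨_, MyBuild.base x y z e1 e2 e3 hxy hxz hyz h1 h2 h3⟩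
  | grow S F hT v a b hv e he hab e1 e2 h1 h2 ih =>
      obtain ⟨L, hL⟩ := ih
      have ha : a ∈ S := tt_sub hT e he a (by rw [hab]; simp)
      have hb : b ∈ S := tt_sub hT e he b (by rw [hab]; simp)
      exact ⟨_, MyBuild.grow S F L hL v a b hv ha hb (ends_ne hab) ⟨e, he, hab⟩ e1 e2 h1 h2⟩

lemma build_sub {S : Set G.V} {F : Set G.E} {L : List (G.V × G.V × G.V)}
    (h : MyBuild G S F L) : ∀ e ∈ F, ∀ w, w ∈ G.ends e → w ∈ S := by
  induction h with
  | base x y z e1 e2 e3 hxy hxz hyz h1 h2 h3 =>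
      intro e he w hw
      rcases he with he | he | he <;> subst he <;>
        [rw [h1] at hw; rw [h2] at hw; rw [h3] at hw] <;>
        rcases Sym2.mem_iff.1 hw with h' | h' <;> subst h' <;> simp
  | grow S F L hT v a b hv ha hb hab hedge e1 e2 h1 h2 ih =>
      intro e' he' w hw
      rcases he' with he' | he' | he'
      · subst he'; rw [h1] at hw
        rcases Sym2.mem_iff.1 hw with h' | h' <;> subst h'
        · exact Set.mem_insert _ _
        · exact Set.mem_insert_of_mem _ ha
      · subst he'; rw [h2] at hw
        rcases Sym2.mem_iff.1 hw with h' | h' <;> subst h'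
        · exact Set.mem_insert _ _
        · exact Set.mem_insert_of_mem _ hb
      · exact Set.mem_insert_of_mem _ (ih e' he' w hw)

lemma build_nonempty {S : Set G.V} {F : Set G.E} {L : List (G.V × G.V × G.V)}
    (h : MyBuild G S F L) : Nonempty G.E := by
  cases h with
  | base x y z e1 e2 e3 => exact ⟨e1⟩
  | grow S F L hT v a b hv ha hb hab hedge e1 e2 => exact ⟨e1⟩

lemma tri_sub {S : Set G.V} {F : Set G.E} {L : List (G.V × G.V × G.V)}
    (h : MyBuild G S F L) : ∀ Δ ∈ L, Δ.1 ∈ S ∧ Δ.2.1 ∈ S ∧ Δ.2.2 ∈ S := by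
  induction h with
  | base x y z e1 e2 e3 hxy hxz hyz h1 h2 h3 =>
      intro Δ hΔ
      simp only [List.mem_singleton] at hΔ
      subst hΔ; exact ⟨by simp, by simp, by simp⟩
  | grow S F L hT v a b hv ha hb hab hedge e1 e2 h1 h2 ih =>
      intro Δ hΔ
      rcases List.mem_cons.1 hΔ with hΔ | hΔ
      · subst hΔ
        exact ⟨Set.mem_insert _ _, Set.mem_insert_of_mem _ ha, Set.mem_insert_of_mem _ hb⟩
      · obtain ⟨q1, q2, q3⟩ := ih Δ hΔ
        exact ⟨Set.mem_insert_of_mem _ q1, Set.mem_insert_of_mem _ q2,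
          Set.mem_insert_of_mem _ q3⟩

lemma tri_nodup {S : Set G.V} {F : Set G.E} {L : List (G.V × G.V × G.V)}
    (h : MyBuild G S F L) :
    ∀ Δ ∈ L, Δ.1 ≠ Δ.2.1 ∧ Δ.1 ≠ Δ.2.2 ∧ Δ.2.1 ≠ Δ.2.2 := by
  induction h with
  | base x y z e1 e2 e3 hxy hxz hyz h1 h2 h3 =>
      intro Δ hΔ
      simp only [List.mem_singleton] at hΔ
      subst hΔ; exact ⟨hxy, hxz, hyz⟩
  | grow S F L hT v a b hv ha hb hab hedge e1 e2 h1 h2 ih =>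
      intro Δ hΔ
      rcases List.mem_cons.1 hΔ with hΔ | hΔ
      · subst hΔ
        exact ⟨fun h' => hv (by rw [show v = a from h']; exact ha),
          fun h' => hv (by rw [show v = b from h']; exact hb), hab⟩
      · exact ih Δ hΔ

lemma combo_out {S : Set G.V} {F : Set G.E} {L : List (G.V × G.V × G.V)}
    (h : MyBuild G S F L) {u : G.V} (hu : u ∉ S) (t : ℕ → ZMod 3) :
    combo L t u = 0 := by
  refine combo_zero L t u fun Δ hΔ => ?_
  obtain ⟨q1, q2, q3⟩ := tri_sub h Δ hΔ
  exact chiT_zero (fun h' => hu (h' ▸ q1)) (fun h' => hu (h' ▸ q2)) (fun h' => hu (h' ▸ q3))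

lemma chiT_head {v a b : G.V} (hva : v ≠ a) (hvb : v ≠ b) :
    chiT (v, a, b) v = 1 := by
  simp [chiT, ind_self, ind_ne (Ne.symm hva), ind_ne (Ne.symm hvb)]

lemma combo_inj {S : Set G.V} {F : Set G.E} {L : List (G.V × G.V × G.V)}
    (h : MyBuild G S F L) (d : ℕ → ZMod 3) (hd : ∀ w, combo L d w = 0) :
    ∀ i, i < L.length → d i = 0 := by
  induction h generalizing d with
  | base x y z e1 e2 e3 hxy hxz hyz h1 h2 h3 =>
      intro i hi
      have hi0 : i = 0 := Nat.lt_one_iff.1 (by simpa using hi)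
      subst hi0
      have := hd x
      simp only [combo] at this
      rw [chiT_head hxy hxz] at this
      simpa using this
  | grow S F L hT v a b hv ha hb hab hedge e1 e2 h1 h2 ih =>
      have hva : v ≠ a := fun h' => hv (h' ▸ ha)
      have hvb : v ≠ b := fun h' => hv (h' ▸ hb)
      intro i hi
      have hd0 : d 0 = 0 := by
        have := hd v
        simp only [combo] at this
        rw [chiT_head hva hvb, combo_out hT hv] at this
        simpa using this
      match i with
      | 0 => exact hd0
      | (j + 1) =>
          refine ih (fun i => d (i + 1)) (fun w => ?_) j (by simpa using hi)
          have := hd w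
          simp only [combo] at this
          rw [hd0] at this
          simpa using this

end S7

namespace S7

variable {G : Multigraph}

lemma chi_one {α : Type} {Δ : α × α × α} {u : α} (h12 : Δ.1 ≠ Δ.2.1)
    (h13 : Δ.1 ≠ Δ.2.2) (h23 : Δ.2.1 ≠ Δ.2.2)
    (hu : u = Δ.1 ∨ u = Δ.2.1 ∨ u = Δ.2.2) : chiT Δ u = 1 := by
  rcases hu with h | h | h <;> subst h
  · rw [chiT, ind_self, ind_ne (Ne.symm h12), ind_ne (Ne.symm h13)]; ring
  · rw [chiT, ind_self, ind_ne h12, ind_ne (Ne.symm h23)]; ring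
  · rw [chiT, ind_self, ind_ne h13, ind_ne h23]; ring

lemma chi_not {α : Type} {Δ : α × α × α} {u : α}
    (hu : ¬(u = Δ.1 ∨ u = Δ.2.1 ∨ u = Δ.2.2)) : chiT Δ u = 0 := by
  push_neg at hu
  exact chiT_zero (fun h => hu.1 h.symm) (fun h => hu.2.1 h.symm) (fun h => hu.2.2 h.symm)

lemma chi01 {α : Type} {Δ : α × α × α} (h12 : Δ.1 ≠ Δ.2.1) (h13 : Δ.1 ≠ Δ.2.2)
    (h23 : Δ.2.1 ≠ Δ.2.2) (w : α) : chiT Δ w = 0 ∨ chiT Δ w = 1 := by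
  by_cases hw : w = Δ.1 ∨ w = Δ.2.1 ∨ w = Δ.2.2
  · exact Or.inr (chi_one h12 h13 h23 hw)
  · exact Or.inl (chi_not hw)

lemma combo_ne_delta {S : Set G.V} {F : Set G.E} {L : List (G.V × G.V × G.V)}
    (h : MyBuild G S F L) :
    ∀ (t : ℕ → ZMod 3) (a b : G.V), (∃ e ∈ F, G.ends e = s(a, b)) →
      ¬ ∀ w, combo L t w = ind a w - ind b w := by
  induction h with
  | base x y z e1 e2 e3 hxy hxz hyz h1 h2 h3 =>
      intro t a b hEdge H
      obtain ⟨e, he, hab2⟩ := hEdge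
      have hab : a ≠ b := ends_ne hab2
      have Ha := H a
      have Hb := H b
      simp only [combo] at Ha Hb
      rw [ind_self, ind_ne (Ne.symm hab)] at Ha
      rw [ind_self, ind_ne hab] at Hb
      rcases chi01 (Δ := (x, y, z)) hxy hxz hyz a with hca | hca <;>
        rcases chi01 (Δ := (x, y, z)) hxy hxz hyz b with hcb | hcb <;>
        rw [hca] at Ha <;> rw [hcb] at Hb <;> revert Ha Hb <;>
        generalize t 0 = c <;> revert c <;> decide
  | grow S F L hT v p q hv hp hq hpq hedge e1 e2 h1 h2 ih =>
      intro t a b hEdge H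
      obtain ⟨e, he, hab2⟩ := hEdge
      have hvp : v ≠ p := fun h' => hv (by rw [h']; exact hp)
      have hvq : v ≠ q := fun h' => hv (by rw [h']; exact hq)
      have hab : a ≠ b := ends_ne hab2
      have hT0 : t 0 = ind a v - ind b v := by
        have Hv := H v
        simp only [combo] at Hv
        rw [chiT_head hvp hvq, combo_out hT hv] at Hv
        simpa using Hv
      by_cases hva : v = a
      · subst hva
        have ht0 : t 0 = 1 := by
          rw [hT0, ind_self, ind_ne (Ne.symm hab)]; ring
        rcases he with he | he | he
        · subst he
          have hpb : p = b := by
            rcases Sym2.eq_iff.1 (h1.symm.trans hab2) with ⟨_, h'⟩ | ⟨h', _⟩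
            · exact h'
            · exact absurd h' hab
          subst hpb
          refine ih (fun i => t (i + 1)) p q hedge fun w => ?_
          have Hw := H w
          simp only [combo, chiT] at Hw
          rw [ht0] at Hw
          linear_combination Hw - ind p w * three0
        · subst he
          have hqb : q = b := by
            rcases Sym2.eq_iff.1 (h2.symm.trans hab2) with ⟨_, h'⟩ | ⟨h', _⟩
            · exact h'
            · exact absurd h' hab
          subst hqb
          refine ih (fun i => t (i + 1)) q p
            (by obtain ⟨e', he', hh⟩ := hedge; exact ⟨e', he', by rw [hh, Sym2.eq_swap]⟩)
            fun w => ?_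
          have Hw := H w
          simp only [combo, chiT] at Hw
          rw [ht0] at Hw
          linear_combination Hw - ind q w * three0
        · exact hv (build_sub hT e he v (by rw [hab2]; simp))
      · by_cases hvb : v = b
        · subst hvb
          have ht0 : t 0 = 2 := by
            rw [hT0, ind_self, ind_ne (fun h' => hva h'.symm)]
            try decide
          rcases he with he | he | he
          · subst he
            have hpa : p = a := by
              rcases Sym2.eq_iff.1 (h1.symm.trans hab2) with ⟨h', _⟩ | ⟨_, h'⟩
              · exact absurd h' hva
              · exact h'
            subst hpa
            refine ih (fun i => t (i + 1)) q p
              (by obtain ⟨e', he', hh⟩ := hedge; exact ⟨e', he', by rw [hh, Sym2.eq_swap]⟩)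
              fun w => ?_
            have Hw := H w
            simp only [combo, chiT] at Hw
            rw [ht0] at Hw
            linear_combination Hw - (ind q w + ind v w) * three0
          · subst he
            have hqa : q = a := by
              rcases Sym2.eq_iff.1 (h2.symm.trans hab2) with ⟨h', _⟩ | ⟨_, h'⟩
              · exact absurd h' hva
              · exact h'
            subst hqa
            refine ih (fun i => t (i + 1)) p q hedge fun w => ?_
            have Hw := H w
            simp only [combo, chiT] at Hw
            rw [ht0] at Hw
            linear_combination Hw - (ind p w + ind v w) * three0
          · exact hv (build_sub hT e he v (by rw [hab2]; simp))
        · have ht0 : t 0 = 0 := by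
            rw [hT0, ind_ne (fun h' => hva h'.symm), ind_ne (fun h' => hvb h'.symm)]
            ring
          have H' : ∀ w, combo L (fun i => t (i + 1)) w = ind a w - ind b w := by
            intro w
            have Hw := H w
            simp only [combo] at Hw
            rw [ht0] at Hw
            simpa using Hw
          rcases he with he | he | he
          · subst he
            rcases Sym2.eq_iff.1 (h1.symm.trans hab2) with ⟨h', _⟩ | ⟨h', _⟩
            · exact hva h'
            · exact hvb h'
          · subst he
            rcases Sym2.eq_iff.1 (h2.symm.trans hab2) with ⟨h', _⟩ | ⟨h', _⟩
            · exact hva h'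
            · exact hvb h'
          · exact ih (fun i => t (i + 1)) a b ⟨e, he, hab2⟩ H'

noncomputable def occ {α : Type} (u : α) : List (α × α × α) → ℕ
  | [] => 0
  | Δ :: L => (if u = Δ.1 ∨ u = Δ.2.1 ∨ u = Δ.2.2 then 1 else 0) + occ u L

lemma occ_eq_zero_forall {α : Type} {u : α} {L : List (α × α × α)} (h : occ u L = 0) :
    ∀ Δ ∈ L, ¬(u = Δ.1 ∨ u = Δ.2.1 ∨ u = Δ.2.2) := by
  induction L with
  | nil => simp
  | cons Δ L ih =>
      simp only [occ] at h
      intro Δ' hΔ'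
      rcases List.mem_cons.1 hΔ' with h' | h'
      · subst h'
        intro hc
        rw [if_pos hc] at h
        omega
      · refine ih ?_ Δ' h'
        omega

lemma occ_out {S : Set G.V} {F : Set G.E} {L : List (G.V × G.V × G.V)}
    (h : MyBuild G S F L) {u : G.V} (hu : u ∉ S) : occ u L = 0 := by
  induction h with
  | base x y z e1 e2 e3 hxy hxz hyz h1 h2 h3 =>
      have hn : ¬(u = x ∨ u = y ∨ u = z) := by
        rintro (h' | h' | h') <;> subst h' <;> simp at hu
      simp only [occ]
      rw [if_neg hn]
  | grow S F L hT v p q hv hp hq hpq hedge e1 e2 h1 h2 ih =>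
      have h1' : u ∉ S := fun h' => hu (Set.mem_insert_of_mem _ h')
      have h2' : ¬(u = v ∨ u = p ∨ u = q) := by
        rintro (h' | h' | h') <;> subst h'
        · exact hu (Set.mem_insert _ _)
        · exact h1' hp
        · exact h1' hq
      simp only [occ]
      rw [if_neg h2', ih h1']

lemma occ_pos {S : Set G.V} {F : Set G.E} {L : List (G.V × G.V × G.V)}
    (h : MyBuild G S F L) {u : G.V} (hu : u ∈ S) : 1 ≤ occ u L := by
  induction h with
  | base x y z e1 e2 e3 hxy hxz hyz h1 h2 h3 =>
      have hmem : u = x ∨ u = y ∨ u = z := by simpa using hu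
      have h1 : occ u [(x, y, z)] = 1 := by
        simp only [occ]
        rw [if_pos hmem]
      exact h1.ge
  | grow S F L hT v p q hv hp hq hpq hedge e1 e2 h1 h2 ih =>
      rcases Set.mem_insert_iff.1 hu with h' | h'
      · simp only [occ]
        rw [if_pos (Or.inl h')]
        omega
      · have := ih h'
        simp only [occ]
        split <;> omega

lemma degIn_insert {F : Set G.E} {e : G.E} (h : e ∉ F) (u : G.V) :
    G.degIn (insert e F) u = (if u ∈ G.ends e then 1 else 0) + G.degIn F u := by
  unfold Multigraph.degIn
  by_cases hu : u ∈ G.ends e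
  · have hset : {e' : G.E | e' ∈ insert e F ∧ u ∈ G.ends e'}
        = insert e {e' : G.E | e' ∈ F ∧ u ∈ G.ends e'} := by
      ext e'
      simp only [Set.mem_setOf_eq, Set.mem_insert_iff]
      constructor
      · rintro ⟨h1 | h1, h2⟩
        · exact Or.inl h1
        · exact Or.inr ⟨h1, h2⟩
      · rintro (h1 | ⟨h1, h2⟩)
        · exact ⟨Or.inl h1, h1 ▸ hu⟩
        · exact ⟨Or.inr h1, h2⟩
    rw [hset, Set.ncard_insert_of_notMem (fun hc => h hc.1) (Set.toFinite _), if_pos hu]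
    omega
  · have hset : {e' : G.E | e' ∈ insert e F ∧ u ∈ G.ends e'}
        = {e' : G.E | e' ∈ F ∧ u ∈ G.ends e'} := by
      ext e'
      simp only [Set.mem_setOf_eq, Set.mem_insert_iff]
      constructor
      · rintro ⟨h1 | h1, h2⟩
        · exact absurd (h1 ▸ h2) hu
        · exact ⟨h1, h2⟩
      · rintro ⟨h1, h2⟩
        exact ⟨Or.inr h1, h2⟩
    rw [hset, if_neg hu]
    omega

lemma two_le_degIn {F : Set G.E} {u : G.V} {c d : G.E} (hcd : c ≠ d)
    (hc : c ∈ F) (hd : d ∈ F) (hc' : u ∈ G.ends c) (hd' : u ∈ G.ends d) :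
    2 ≤ G.degIn F u := by
  have hsub : ({c, d} : Set G.E) ⊆ {e' : G.E | e' ∈ F ∧ u ∈ G.ends e'} := by
    rintro e' (h' | h')
    · exact h' ▸ ⟨hc, hc'⟩
    · exact h' ▸ ⟨hd, hd'⟩
  calc 2 = ({c, d} : Set G.E).ncard := (Set.ncard_pair hcd).symm
    _ ≤ _ := Set.ncard_le_ncard hsub (Set.toFinite _)

lemma degIn_ge {S : Set G.V} {F : Set G.E} {L : List (G.V × G.V × G.V)}
    (h : MyBuild G S F L) : ∀ u ∈ S, occ u L + 1 ≤ G.degIn F u := by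
  induction h with
  | base x y z e1 e2 e3 hxy hxz hyz h1 h2 h3 =>
      intro u hu
      have hmem : u = x ∨ u = y ∨ u = z := by simpa using hu
      have hocc : occ u [(x, y, z)] = 1 := by
        simp only [occ]
        rw [if_pos hmem]
      rw [hocc]
      have hne12 : e1 ≠ e2 := by
        intro hc
        rw [hc, h2] at h1
        rcases Sym2.eq_iff.1 h1 with ⟨h', _⟩ | ⟨_, h'⟩
        · exact hxy h'.symm
        · exact hxz h'.symm
      have hne13 : e1 ≠ e3 := by
        intro hc
        rw [hc, h3] at h1
        rcases Sym2.eq_iff.1 h1 with ⟨_, h'⟩ | ⟨h', _⟩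
        · exact hyz h'.symm
        · exact hxy h'
      have hne23 : e2 ≠ e3 := by
        intro hc
        rw [hc, h3] at h2
        rcases Sym2.eq_iff.1 h2 with ⟨h', _⟩ | ⟨h', _⟩
        · exact hxy h'
        · exact hxz h'
      rcases hmem with h' | h' | h' <;> subst h'
      · exact two_le_degIn hne13 (by simp) (by simp) (by rw [h1]; simp) (by rw [h3]; simp)
      · exact two_le_degIn hne12 (by simp) (by simp) (by rw [h1]; simp) (by rw [h2]; simp)
      · exact two_le_degIn hne23 (by simp) (by simp) (by rw [h2]; simp) (by rw [h3]; simp)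
  | grow S F L hT v p q hv hp hq hpq hedge e1 e2 h1 h2 ih =>
      intro u hu
      have hvp : v ≠ p := fun h' => hv (by rw [h']; exact hp)
      have hvq : v ≠ q := fun h' => hv (by rw [h']; exact hq)
      have hne12 : e1 ≠ e2 := by
        intro hc
        rw [hc, h2] at h1
        rcases Sym2.eq_iff.1 h1 with ⟨_, h'⟩ | ⟨h', _⟩
        · exact hpq h'.symm
        · exact hvp h'
      have he1F : e1 ∉ F := fun hc => hv (build_sub hT e1 hc v (by rw [h1]; simp))
      have he2F : e2 ∉ F := fun hc => hv (build_sub hT e2 hc v (by rw [h2]; simp))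
      have he1i : e1 ∉ insert e2 F := by
        intro hc
        rcases Set.mem_insert_iff.1 hc with hc | hc
        · exact hne12 hc
        · exact he1F hc
      rcases Set.mem_insert_iff.1 hu with h' | h'
      · subst h'
        have hocc : occ u ((u, p, q) :: L) = 1 := by
          simp only [occ]
          simp [occ_out hT hv]
        rw [hocc]
        exact two_le_degIn hne12 (Set.mem_insert _ _)
          (Set.mem_insert_of_mem _ (Set.mem_insert _ _))
          (by rw [h1]; simp) (by rw [h2]; simp)
      · have hne : u ≠ v := fun hc => hv (by rw [← hc]; exact h')
        rw [degIn_insert he1i, degIn_insert he2F]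
        have m1 : (u ∈ G.ends e1) ↔ (u = p) := by
          rw [h1]
          simp [Sym2.mem_iff, hne]
        have m2 : (u ∈ G.ends e2) ↔ (u = q) := by
          rw [h2]
          simp [Sym2.mem_iff, hne]
        have IH := ih u h'
        simp only [occ]
        by_cases hup : u = p <;> by_cases huq : u = q
        · rw [if_pos (Or.inr (Or.inl hup)), if_pos (m1.mpr hup), if_pos (m2.mpr huq)]
          omega
        · rw [if_pos (Or.inr (Or.inl hup)), if_pos (m1.mpr hup),
            if_neg (fun hc => huq (m2.mp hc))]
          omega
        · rw [if_pos (Or.inr (Or.inr huq)), if_neg (fun hc => hup (m1.mp hc)),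
            if_pos (m2.mpr huq)]
          omega
        · rw [if_neg (by rintro (hc | hc | hc); exacts [hne hc, hup hc, huq hc]),
            if_neg (fun hc => hup (m1.mp hc)), if_neg (fun hc => huq (m2.mp hc))]
          omega

lemma eval_unique {S : Set G.V} {F : Set G.E} {L : List (G.V × G.V × G.V)}
    (h : MyBuild G S F L) {u : G.V} (hocc : occ u L = 1) :
    ∃ i, i < L.length ∧ ∀ t : ℕ → ZMod 3, combo L t u = t i := by
  induction h with
  | base x y z e1 e2 e3 hxy hxz hyz h1 h2 h3 =>
      have hc : u = x ∨ u = y ∨ u = z := by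
        by_contra hc
        simp only [occ] at hocc
        rw [if_neg hc] at hocc
        simp at hocc
      refine ⟨0, by simp, fun t => ?_⟩
      simp only [combo]
      rw [chi_one hxy hxz hyz hc]
      ring
  | grow S F L hT v p q hv hp hq hpq hedge e1 e2 h1 h2 ih =>
      have hvp : v ≠ p := fun h' => hv (by rw [h']; exact hp)
      have hvq : v ≠ q := fun h' => hv (by rw [h']; exact hq)
      by_cases hc : u = v ∨ u = p ∨ u = q
      · have hocc0 : occ u L = 0 := by
          simp only [occ] at hocc
          rw [if_pos hc] at hocc
          omega
        refine ⟨0, by simp, fun t => ?_⟩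
        simp only [combo]
        rw [chi_one hvp hvq hpq hc,
          combo_zero L _ u (fun Δ hΔ => chi_not (occ_eq_zero_forall hocc0 Δ hΔ))]
        ring
      · have hocc1 : occ u L = 1 := by
          simp only [occ] at hocc
          rw [if_neg hc] at hocc
          omega
        obtain ⟨i, hi, hcombo⟩ := ih hocc1
        refine ⟨i + 1, by simpa using Nat.succ_lt_succ hi, fun t => ?_⟩
        simp only [combo]
        rw [chi_not hc, hcombo fun i => t (i + 1)]
        ring

end S7

namespace S7

variable {G : Multigraph}

/-- membership in the set of signed sums of triangle vectors -/
def SSmem (L : List (G.V × G.V × G.V)) (β : G.V → ZMod 3) : Prop :=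
  ∃ s : ℕ → ZMod 3, (∀ i, i < L.length → s i ≠ 0) ∧ ∀ w, β w = combo L s w

lemma realize {S : Set G.V} {F : Set G.E} {L : List (G.V × G.V × G.V)}
    (h : MyBuild G S F L) :
    ∀ β : G.V → ZMod 3, (∀ v, v ∉ S → β v = 0) → (∑ v, β v) = 0 → ¬ SSmem L β →
      ∃ D : G.E → G.V × G.V, G.IsOrientation D ∧ ∀ v, netf G F D v = β v := by
  induction h with
  | base x y z e1 e2 e3 hxy hxz hyz h1 h2 h3 =>
      intro β hsupp hsum hss
      have hne12 : e1 ≠ e2 := by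
        intro hc
        rw [hc, h2] at h1
        rcases Sym2.eq_iff.1 h1 with ⟨h', _⟩ | ⟨_, h'⟩
        · exact hxy h'.symm
        · exact hxz h'.symm
      have hne13 : e1 ≠ e3 := by
        intro hc
        rw [hc, h3] at h1
        rcases Sym2.eq_iff.1 h1 with ⟨_, h'⟩ | ⟨h', _⟩
        · exact hyz h'.symm
        · exact hxy h'
      have hne23 : e2 ≠ e3 := by
        intro hc
        rw [hc, h3] at h2
        rcases Sym2.eq_iff.1 h2 with ⟨h', _⟩ | ⟨h', _⟩
        · exact hxy h'
        · exact hxz h'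
      have hsum3 : β x + β y + β z = 0 := by
        have hzero : ∀ v ∈ Finset.univ, v ∉ ({x, y, z} : Finset G.V) → β v = 0 := by
          intro v _ hv
          refine hsupp v fun hm => hv ?_
          rcases hm with hm | hm | hm <;> subst hm <;> simp
        have e1' : ∑ v ∈ ({x, y, z} : Finset G.V), β v = ∑ v, β v :=
          Finset.sum_subset (Finset.subset_univ _) hzero
        have e2' : ∑ v ∈ ({x, y, z} : Finset G.V), β v = β x + β y + β z := by
          rw [show ({x, y, z} : Finset G.V) = insert x (insert y {z}) from rfl,
            Finset.sum_insert (by simp [hxy, hxz]),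
            Finset.sum_insert (by simp [hyz]), Finset.sum_singleton]
          ring
        rw [← e2', e1', hsum]
      -- produce suitable edge values
      have key : ∀ f1 f2 f3 : ZMod 3, f1 ≠ 0 → f2 ≠ 0 → f3 ≠ 0 →
          f1 + f3 = β x → f2 - f1 = β y →
          ∃ D : G.E → G.V × G.V, G.IsOrientation D ∧
            ∀ v, netf G {e1, e2, e3} D v = β v := by
        intro f1 f2 f3 hf1 hf2 hf3 e13 e12
        obtain ⟨p1, hp1e, hp1⟩ := orient_mul e1 x y h1 f1 hf1
        obtain ⟨p2, hp2e, hp2⟩ := orient_mul e2 y z h2 f2 hf2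
        obtain ⟨p3, hp3e, hp3⟩ := orient_mul e3 x z h3 f3 hf3
        obtain ⟨D, hD⟩ : ∃ D : G.E → G.V × G.V, ∀ e, D e = if e = e1 then p1 else
            if e = e2 then p2 else if e = e3 then p3 else dflt G e :=
          ⟨_, fun e => rfl⟩
        have hD1 : D e1 = p1 := by rw [hD, if_pos rfl]
        have hD2 : D e2 = p2 := by rw [hD, if_neg (Ne.symm hne12), if_pos rfl]
        have hD3 : D e3 = p3 := by
          rw [hD, if_neg (Ne.symm hne13), if_neg (Ne.symm hne23), if_pos rfl]
        refine ⟨D, ?_, ?_⟩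
        · intro e
          rw [hD e]
          by_cases q1 : e = e1
          · subst q1; rw [if_pos rfl]; exact hp1e
          · by_cases q2 : e = e2
            · subst q2; rw [if_neg q1, if_pos rfl]; exact hp2e
            · by_cases q3 : e = e3
              · subst q3; rw [if_neg q1, if_neg q2, if_pos rfl]; exact hp3e
              · rw [if_neg q1, if_neg q2, if_neg q3]; exact dflt_spec G e
        · intro w
          have hF : ({e1, e2, e3} : Set G.E)
              = insert e1 (insert e2 (insert e3 (∅ : Set G.E))) := by
            ext e'; simp
          have hm1 : e1 ∉ insert e2 (insert e3 (∅ : Set G.E)) := by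
            simp [hne12, hne13]
          have hm2 : e2 ∉ insert e3 (∅ : Set G.E) := by simp [hne23]
          have hm3 : e3 ∉ (∅ : Set G.E) := by simp
          rw [hF, netf_insert hm1, netf_insert hm2, netf_insert hm3, netf_empty,
            hD1, hD2, hD3, hp1, hp2, hp3]
          by_cases w1 : x = w
          · subst w1
            rw [ind_self, ind_ne (Ne.symm hxy), ind_ne (Ne.symm hxz)]
            linear_combination e13
          · by_cases w2 : y = w
            · subst w2
              rw [ind_self, ind_ne hxy, ind_ne (Ne.symm hyz)]
              linear_combination e12
            · by_cases w3 : z = w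
              · subst w3
                rw [ind_self, ind_ne hxz, ind_ne hyz]
                linear_combination -hsum3 - e13 - e12
              · rw [ind_ne w1, ind_ne w2, ind_ne w3, hsupp w (by
                  intro hm
                  rcases hm with hm | hm | hm <;> subst hm
                  exacts [w1 rfl, w2 rfl, w3 rfl])]
                ring
      rcases zmod3cases (β x) with ha | ha | ha
      · by_cases hb : β y = 2
        · exact key 2 1 1 (by decide) (by decide) (by decide)
            (by rw [ha]; decide) (by rw [hb]; decide)
        · refine key 1 (β y + 1) 2 (by decide) ?_ (by decide) (by rw [ha]; decide)
            (by ring)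
          intro hc
          apply hb
          have : β y = -1 := by linear_combination hc
          rw [this]; decide
      · by_cases hb : β y = 1
        · exfalso
          apply hss
          refine ⟨fun _ => 1, fun i _ => (by decide : (1 : ZMod 3) ≠ 0), fun w => ?_⟩
          have hz : β z = 1 := by
            rw [ha, hb] at hsum3
            linear_combination hsum3 - three0
          simp only [combo]
          by_cases w1 : w = x
          · rw [w1, chi_one (Δ := (x, y, z)) hxy hxz hyz (Or.inl rfl), ha]; ring
          · by_cases w2 : w = y
            · rw [w2, chi_one (Δ := (x, y, z)) hxy hxz hyz (Or.inr (Or.inl rfl)), hb]; ring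
            · by_cases w3 : w = z
              · rw [w3, chi_one (Δ := (x, y, z)) hxy hxz hyz (Or.inr (Or.inr rfl)), hz]; ring
              · rw [chi_not (by tauto), hsupp w (by
                  intro hm
                  rcases hm with hm | hm | hm <;> [exact w1 hm; exact w2 hm; exact w3 hm])]
                ring
        · refine key 2 (β y + 2) 2 (by decide) ?_ (by decide) (by rw [ha]; decide)
            (by ring)
          intro hc
          apply hb
          have : β y = -2 := by linear_combination hc
          rw [this]; decide
      · by_cases hb : β y = 2
        · exfalso
          apply hss
          refine ⟨fun _ => 2, fun i _ => (by decide : (2 : ZMod 3) ≠ 0), fun w => ?_⟩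
          have hz : β z = 2 := by
            rw [ha, hb] at hsum3
            linear_combination hsum3 - 2 * three0
          simp only [combo]
          by_cases w1 : w = x
          · rw [w1, chi_one (Δ := (x, y, z)) hxy hxz hyz (Or.inl rfl), ha]; ring
          · by_cases w2 : w = y
            · rw [w2, chi_one (Δ := (x, y, z)) hxy hxz hyz (Or.inr (Or.inl rfl)), hb]; ring
            · by_cases w3 : w = z
              · rw [w3, chi_one (Δ := (x, y, z)) hxy hxz hyz (Or.inr (Or.inr rfl)), hz]; ring
              · rw [chi_not (by tauto), hsupp w (by
                  intro hm
                  rcases hm with hm | hm | hm <;> [exact w1 hm; exact w2 hm; exact w3 hm])]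
                ring
        · refine key 1 (β y + 1) 1 (by decide) ?_ (by decide) (by rw [ha]; decide)
            (by ring)
          intro hc
          apply hb
          have : β y = -1 := by linear_combination hc
          rw [this]; decide
  | grow S F L hT v p q hv hp hq hpq hedge e1 e2 h1 h2 ih =>
      intro β hsupp hsum hss
      have hvp : v ≠ p := fun h' => hv (by rw [h']; exact hp)
      have hvq : v ≠ q := fun h' => hv (by rw [h']; exact hq)
      have hne12 : e1 ≠ e2 := by
        intro hc
        rw [hc, h2] at h1
        rcases Sym2.eq_iff.1 h1 with ⟨_, h'⟩ | ⟨h', _⟩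
        · exact hpq h'.symm
        · exact hvp h'
      have he1F : e1 ∉ F := fun hc => hv (build_sub hT e1 hc v (by rw [h1]; simp))
      have he2F : e2 ∉ F := fun hc => hv (build_sub hT e2 hc v (by rw [h2]; simp))
      have he1i : e1 ∉ insert e2 F := by
        intro hc
        rcases Set.mem_insert_iff.1 hc with hc | hc
        · exact hne12 hc
        · exact he1F hc
      have main : ∀ fa fb : ZMod 3, fa ≠ 0 → fb ≠ 0 → fa + fb = β v →
          ¬ SSmem L (fun w => β w - β v * ind v w + fa * ind p w + fb * ind q w) →
          ∃ D : G.E → G.V × G.V, G.IsOrientation D ∧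
            ∀ w, netf G (insert e1 (insert e2 F)) D w = β w := by
        intro fa fb hfa hfb hsum2 hss'
        have hsupp' : ∀ w, w ∉ S →
            (β w - β v * ind v w + fa * ind p w + fb * ind q w) = 0 := by
          intro w hw
          by_cases hwv : w = v
          · subst hwv
            rw [ind_self, ind_ne (Ne.symm hvp), ind_ne (Ne.symm hvq)]
            ring
          · have hβw : β w = 0 := hsupp w (by
              intro hm
              rcases Set.mem_insert_iff.1 hm with hm | hm
              · exact hwv hm
              · exact hw hm)
            rw [hβw, ind_ne (fun h' => hwv h'.symm),
              ind_ne (fun h' => hw (by rw [← h']; exact hp)),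
              ind_ne (fun h' => hw (by rw [← h']; exact hq))]
            ring
        have hsum' : (∑ w, (β w - β v * ind v w + fa * ind p w + fb * ind q w)) = 0 := by
          rw [Finset.sum_add_distrib, Finset.sum_add_distrib, Finset.sum_sub_distrib,
            ← Finset.mul_sum, ← Finset.mul_sum, ← Finset.mul_sum,
            sum_ind, sum_ind, sum_ind, hsum]
          linear_combination hsum2
        obtain ⟨D0, hD0o, hD0⟩ := ih _ hsupp' hsum' hss'
        obtain ⟨p1, hp1e, hp1⟩ := orient_mul e1 v p h1 fa hfa
        obtain ⟨p2, hp2e, hp2⟩ := orient_mul e2 v q h2 fb hfb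
        obtain ⟨D, hD⟩ : ∃ D : G.E → G.V × G.V, ∀ e, D e = if e = e1 then p1 else
            if e = e2 then p2 else D0 e := ⟨_, fun e => rfl⟩
        have hD1 : D e1 = p1 := by rw [hD, if_pos rfl]
        have hD2 : D e2 = p2 := by rw [hD, if_neg (Ne.symm hne12), if_pos rfl]
        refine ⟨D, ?_, ?_⟩
        · intro e
          rw [hD e]
          by_cases q1 : e = e1
          · subst q1; rw [if_pos rfl]; exact hp1e
          · by_cases q2 : e = e2
            · subst q2; rw [if_neg q1, if_pos rfl]; exact hp2e
            · rw [if_neg q1, if_neg q2]; exact hD0o e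
        · intro w
          rw [netf_insert he1i, netf_insert he2F,
            netf_congr (D' := D0) (fun e he => by
              rw [hD e, if_neg (fun hc : e = e1 => he1F (hc ▸ he)),
                if_neg (fun hc : e = e2 => he2F (hc ▸ he))]) w,
            hD0 w, hD1, hD2, hp1, hp2]
          linear_combination ind v w * hsum2
      rcases zmod3cases (β v) with hβv | hβv | hβv
      · -- β v = 0 : one of the choices (1,2), (2,1) works
        by_cases hc : SSmem L (fun w => β w - β v * ind v w + 1 * ind p w + 2 * ind q w)
        · obtain ⟨s1, hnz1, hc1⟩ := hc
          refine main 2 1 (by decide) (by decide) (by rw [hβv]; decide) ?_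
          rintro ⟨s2, hnz2, hc2⟩
          refine combo_ne_delta hT (fun i => s1 i - s2 i) q p
            (by obtain ⟨e', he', hh⟩ := hedge; exact ⟨e', he', by rw [hh, Sym2.eq_swap]⟩)
            fun w => ?_
          rw [combo_sub, ← hc1 w, ← hc2 w]
          ring
        · exact main 1 2 (by decide) (by decide) (by rw [hβv]; decide) hc
      · -- β v = 1 : use (2,2)
        refine main 2 2 (by decide) (by decide) (by rw [hβv]; decide) ?_
        rintro ⟨s', hnz, hs'⟩
        apply hss
        obtain ⟨s, hs0, hsS⟩ : ∃ s : ℕ → ZMod 3, s 0 = 1 ∧ ∀ j, s (j + 1) = s' j :=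
          ⟨fun i => match i with | 0 => 1 | j + 1 => s' j, rfl, fun j => rfl⟩
        refine ⟨s, fun i hi => ?_, fun w => ?_⟩
        · cases i with
          | zero => rw [hs0]; decide
          | succ j =>
              rw [hsS]
              simp only [List.length_cons] at hi
              exact hnz j (by omega)
        · simp only [combo]
          rw [hs0, combo_congr L (fun i _ => hsS i) w, ← hs' w]
          simp only [chiT]
          linear_combination ind v w * hβv - (ind p w + ind q w) * three0
      · -- β v = 2 : use (1,1)
        refine main 1 1 (by decide) (by decide) (by rw [hβv]; decide) ?_
        rintro ⟨s', hnz, hs'⟩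
        apply hss
        obtain ⟨s, hs0, hsS⟩ : ∃ s : ℕ → ZMod 3, s 0 = 2 ∧ ∀ j, s (j + 1) = s' j :=
          ⟨fun i => match i with | 0 => 2 | j + 1 => s' j, rfl, fun j => rfl⟩
        refine ⟨s, fun i hi => ?_, fun w => ?_⟩
        · cases i with
          | zero => rw [hs0]; decide
          | succ j =>
              rw [hsS]
              simp only [List.length_cons] at hi
              exact hnz j (by omega)
        · simp only [combo]
          rw [hs0, combo_congr L (fun i _ => hsS i) w, ← hs' w]
          simp only [chiT]
          linear_combination ind v w * hβv - (ind p w + ind q w) * three0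

end S7

theorem stmt_7' (T T' : Multigraph) (hT : T.IsTriangleTree Set.univ Set.univ)
    (x1 : T.V) (hx1 : T.degree x1 = 2) (y z : T.V) (hy : y ≠ x1) (hz : z ≠ x1)
    (hAdd : T.IsAddTwoEdges s(x1, y) s(x1, z) T') :
    T'.Z3Connected := by
  obtain ⟨φ, f1, f2, hne, hends1, hends2, ψ, hψinj, hψrange, hψends⟩ := hAdd
  obtain ⟨L, hL⟩ := S7.tt_build hT
  intro β' hβ'
  -- the leaf x1 lies in exactly one triangle of the build
  have hoccx : S7.occ x1 L = 1 := by
    have h1 := S7.degIn_ge hL x1 (Set.mem_univ _)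
    have h2 := S7.occ_pos hL (Set.mem_univ x1)
    have h3 : T.degIn Set.univ x1 = T.degree x1 := by
      unfold Multigraph.degIn Multigraph.degree
      congr 1
      ext e
      simp
    rw [h3, hx1] at h1
    omega
  obtain ⟨i0, hi0len, hi0⟩ := S7.eval_unique hL hoccx
  -- choose a good corner
  have corner : ∃ ε1 ε2 : ZMod 3, ε1 ≠ 0 ∧ ε2 ≠ 0 ∧
      ¬ S7.SSmem L (fun w => β' (φ w) - ε1 * (S7.ind x1 w - S7.ind y w)
        - ε2 * (S7.ind x1 w - S7.ind z w)) := by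
    by_contra hcon
    push_neg at hcon
    obtain ⟨s11, hnz11, hc11⟩ := hcon 1 1 (by decide) (by decide)
    obtain ⟨s12, hnz12, hc12⟩ := hcon 1 2 (by decide) (by decide)
    obtain ⟨s21, hnz21, hc21⟩ := hcon 2 1 (by decide) (by decide)
    obtain ⟨s22, hnz22, hc22⟩ := hcon 2 2 (by decide) (by decide)
    have hd : ∀ w, S7.combo L (fun i => s11 i - s21 i) w = S7.ind x1 w - S7.ind y w := by
      intro w
      rw [S7.combo_sub, ← hc11 w, ← hc21 w]
      ring
    have hd' : ∀ w, S7.combo L (fun i => s12 i - s22 i) w = S7.ind x1 w - S7.ind y w := by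
      intro w
      rw [S7.combo_sub, ← hc12 w, ← hc22 w]
      ring
    have hg : ∀ w, S7.combo L (fun i => s11 i - s12 i) w = S7.ind x1 w - S7.ind z w := by
      intro w
      rw [S7.combo_sub, ← hc11 w, ← hc12 w]
      ring
    have e_d : s11 i0 - s21 i0 = 1 := by
      have h := hd x1
      rw [hi0 (fun i => s11 i - s21 i), S7.ind_self, S7.ind_ne hy] at h
      simpa using h
    have e_d' : s12 i0 - s22 i0 = 1 := by
      have h := hd' x1
      rw [hi0 (fun i => s12 i - s22 i), S7.ind_self, S7.ind_ne hy] at h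
      simpa using h
    have e_g : s11 i0 - s12 i0 = 1 := by
      have h := hg x1
      rw [hi0 (fun i => s11 i - s12 i), S7.ind_self, S7.ind_ne hz] at h
      simpa using h
    have h21 : s21 i0 = s11 i0 - 1 := by linear_combination -e_d
    have h22 : s22 i0 = s11 i0 - 2 := by linear_combination -e_d' - e_g
    rcases S7.zmod3cases (s11 i0) with hu | hu | hu
    · exact hnz11 i0 hi0len hu
    · refine hnz21 i0 hi0len ?_
      rw [h21, hu]; decide
    · refine hnz22 i0 hi0len ?_
      rw [h22, hu]; decide
  obtain ⟨ε1, ε2, hε1, hε2, hSS⟩ := corner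
  -- realize the corner boundary on the triangle-tree
  have hsumβ : (∑ w : T.V, β' (φ w)) = 0 := by
    rw [Equiv.sum_comp φ β']
    exact hβ'
  have hδ : ∀ a b : T.V, (∑ w : T.V, (S7.ind a w - S7.ind b w)) = 0 := by
    intro a b
    rw [Finset.sum_sub_distrib, S7.sum_ind, S7.sum_ind]
    ring
  have hsumc : (∑ w : T.V, (β' (φ w) - ε1 * (S7.ind x1 w - S7.ind y w)
      - ε2 * (S7.ind x1 w - S7.ind z w))) = 0 := by
    rw [Finset.sum_sub_distrib, Finset.sum_sub_distrib, ← Finset.mul_sum, ← Finset.mul_sum,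
      hδ, hδ, hsumβ]
    ring
  obtain ⟨D, hDo, hDn⟩ := S7.realize hL _ (fun v hv => absurd (Set.mem_univ v) hv) hsumc hSS
  -- orientations for the two new edges
  have he1 : T'.ends f1 = s(φ x1, φ y) := by rw [hends1, Sym2.map_pair_eq]
  have he2 : T'.ends f2 = s(φ x1, φ z) := by rw [hends2, Sym2.map_pair_eq]
  obtain ⟨q1, hq1e, hq1⟩ := S7.orient_mul f1 (φ x1) (φ y) he1 ε1 hε1
  obtain ⟨q2, hq2e, hq2⟩ := S7.orient_mul f2 (φ x1) (φ z) he2 ε2 hε2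
  haveI : Nonempty T.E := S7.build_nonempty hL
  have hlinv : Function.LeftInverse (Function.invFun ψ) ψ :=
    Function.leftInverse_invFun hψinj
  obtain ⟨D', hD'⟩ : ∃ D' : T'.E → T'.V × T'.V, ∀ e, D' e = if e = f1 then q1 else
      if e = f2 then q2 else
        (φ (D (Function.invFun ψ e)).1, φ (D (Function.invFun ψ e)).2) :=
    ⟨_, fun e => rfl⟩
  have hψe : ∀ e : T.E, ψ e ≠ f1 ∧ ψ e ≠ f2 := by
    intro e
    have hmem : ψ e ∈ Set.range ψ := ⟨e, rfl⟩
    rw [hψrange] at hmem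
    exact hmem
  have hD'ψ : ∀ e : T.E, D' (ψ e) = (φ (D e).1, φ (D e).2) := by
    intro e
    rw [hD', if_neg (hψe e).1, if_neg (hψe e).2, hlinv e]
  have hD'1 : D' f1 = q1 := by rw [hD', if_pos rfl]
  have hD'2 : D' f2 = q2 := by rw [hD', if_neg (Ne.symm hne), if_pos rfl]
  refine ⟨D', ?_, ?_⟩
  · -- D' is an orientation
    intro e
    by_cases q1' : e = f1
    · subst q1'; rw [hD'1]; exact hq1e
    · by_cases q2' : e = f2
      · subst q2'; rw [hD'2]; exact hq2e
      · have hmem : e ∈ Set.range ψ := by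
          rw [hψrange]
          exact ⟨q1', q2'⟩
        obtain ⟨e0, rfl⟩ := hmem
        rw [hD'ψ e0, hψends e0, hDo e0, Sym2.map_pair_eq]
  · -- boundary condition
    intro v'
    rw [S7.deg_sub D' v']
    obtain ⟨w, rfl⟩ : ∃ w, φ w = v' := ⟨φ.symm v', by simp⟩
    have hφind : ∀ a b : T.V, S7.ind (φ a) (φ b) = S7.ind a b := by
      intro a b
      by_cases h : a = b
      · rw [h, S7.ind_self, S7.ind_self]
      · rw [S7.ind_ne (fun hc => h (φ.injective hc)), S7.ind_ne h]
    have hA : (∑ e : T'.E, S7.ctrb (D' e) (φ w))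
        = S7.ctrb (D' f1) (φ w) + S7.ctrb (D' f2) (φ w)
          + ∑ e ∈ (Finset.univ.erase f1).erase f2, S7.ctrb (D' e) (φ w) := by
      rw [← Finset.add_sum_erase _ _ (Finset.mem_univ f1),
        ← Finset.add_sum_erase _ _ (Finset.mem_erase.2 ⟨Ne.symm hne, Finset.mem_univ f2⟩)]
      ring
    have himg : Finset.univ.image ψ = (Finset.univ.erase f1).erase f2 := by
      ext e'
      constructor
      · intro hmem
        obtain ⟨e0, _, rfl⟩ := Finset.mem_image.1 hmem
        exact Finset.mem_erase.2 ⟨(hψe e0).2, Finset.mem_erase.2 ⟨(hψe e0).1,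
          Finset.mem_univ _⟩⟩
      · intro hmem
        have h2 := Finset.mem_erase.1 hmem
        have h1 := Finset.mem_erase.1 h2.2
        have : e' ∈ Set.range ψ := by
          rw [hψrange]
          exact ⟨h1.1, h2.1⟩
        obtain ⟨e0, rfl⟩ := this
        exact Finset.mem_image.2 ⟨e0, Finset.mem_univ _, rfl⟩
    have hB : (∑ e ∈ (Finset.univ.erase f1).erase f2, S7.ctrb (D' e) (φ w))
        = ∑ e : T.E, S7.ctrb (D e) w := by
      rw [← himg, Finset.sum_image (fun a _ b _ hab => hψinj hab)]
      refine Finset.sum_congr rfl fun e _ => ?_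
      rw [hD'ψ e]
      show S7.ind (φ (D e).1) (φ w) - S7.ind (φ (D e).2) (φ w) = _
      rw [hφind, hφind]
      rfl
    rw [hA, hB, hD'1, hD'2, hq1, hq2, hφind, hφind, hφind]
    have hnet : (∑ e : T.E, S7.ctrb (D e) w)
        = β' (φ w) - ε1 * (S7.ind x1 w - S7.ind y w) - ε2 * (S7.ind x1 w - S7.ind z w) := by
      rw [← S7.netf_univ, hDn w]
    rw [hnet]
    ring


/-- Let `T` be a triangle-tree in which `x1` is a leaf. Then for any
vertices `y, z` other than `x1`, the graph `T + x1y + x1z` is `Z3`-connected. -/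
theorem stmt_7 (T T' : Multigraph) (hT : T.IsTriangleTree Set.univ Set.univ)
    (x1 : T.V) (hx1 : T.degree x1 = 2) (y z : T.V) (hy : y ≠ x1) (hz : z ≠ x1)
    (hAdd : T.IsAddTwoEdges s(x1, y) s(x1, z) T') :
    T'.Z3Connected :=
  stmt_7' T T' hT x1 hx1 y z hy hz hAdd
end

section
/- Let G be a finite loopless graph (parallel edges allowed) containing a spanning triangle-tree T. If the graph G − E(T), obtained from G by deleting the edges of T, contains a cycle (possibly a 2-cycle formed by parallel edges), then G is Z3-connected. -/
open scoped Classical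

/-!
Fix a reference orientation `o`. Reversing the edges on which a nowhere-zero `ε : E → ℤ/3`
equals `-1` gives an orientation whose boundary (out-degree minus in-degree) is
`∑ ε e (δ_tail - δ_head)`, so `G` is `Z3`-connected once every `β` of total sum zero is such a
boundary with `ε` nowhere zero.

Along the construction of a triangle-tree `T`, the boundaries supported on `V(T)` that no
nowhere-zero function on `E(T)` realizes are combinations `∑ σ_t w_t`, all `σ_t ≠ 0`, of the
(linearly independent) indicator vectors `w_t` of the triangles added. When a new vertex `v` is
glued to an edge `ab`, the values on `va` and `vb` are forced by `β v` unless `β v = 0`; then the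
two admissible choices differ by `2 (δ_a - δ_b)`, and both fail only if `μ a = μ b` for a proper
3-colouring `μ` of `T` orthogonal to every `w_t`.

A cycle of `G - E(T)` through an edge `uv` realizes `d (δ_u - δ_v)` for each `d ∈ ℤ/3`, and by
independence of the `w_t` the three translates `β - d (δ_u - δ_v)` cannot all be exceptional.
-/

namespace Z3Flow

variable {V ι : Type*}

noncomputable def arcVec (a b : V) : V → ZMod 3 := Pi.single a 1 - Pi.single b 1

noncomputable def triVec (a b c : V) : V → ZMod 3 := Pi.single a 1 + Pi.single b 1 + Pi.single c 1

lemma arcVec_swap (a b : V) : arcVec b a = -arcVec a b := by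
  simp [arcVec]

lemma arcVec_sub_arcVec (v a b : V) : arcVec v a - arcVec v b = arcVec b a := by
  simp only [arcVec]; abel

lemma arcVec_add_arcVec (v a b : V) : arcVec v a + arcVec v b = -triVec v a b := by
  ext x
  simp only [arcVec, triVec, Pi.add_apply, Pi.sub_apply, Pi.neg_apply]
  have key : ∀ p q r : ZMod 3, p - q + (p - r) = -(p + q + r) := by decide
  exact key _ _ _

lemma arcVec_apply_of_ne {a b x : V} (hxa : x ≠ a) (hxb : x ≠ b) : arcVec a b x = 0 := by
  simp [arcVec, hxa, hxb]

lemma triVec_apply_of_ne {a b c x : V} (hxa : x ≠ a) (hxb : x ≠ b) (hxc : x ≠ c) :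
    triVec a b c x = 0 := by
  simp [triVec, hxa, hxb, hxc]

lemma arcVec_ne_zero {a b : V} (hab : a ≠ b) : arcVec a b ≠ 0 := fun h => by
  simpa [arcVec, hab] using congrFun h a

def nzCombinations (R : Type*) {M : Type*} [Semiring R] [AddCommMonoid M] [Module R M]
    [Fintype ι] (w : ι → M) : Set M :=
  Fintype.linearCombination R w '' {σ | ∀ i, σ i ≠ 0}

lemma not_forall_sub_smul_mem_nzCombinations [Fintype ι] {w : ι → V → ZMod 3}
    (hw : LinearIndependent (ZMod 3) w) {z : V → ZMod 3} (hz : z ≠ 0) (α : V → ZMod 3) :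
    ¬ ∀ d : ZMod 3, α - d • z ∈ nzCombinations (ZMod 3) w := by
  intro h
  obtain ⟨σ₀, hσ₀, h₀⟩ := h 0
  obtain ⟨σ₁, hσ₁, h₁⟩ := h 1
  obtain ⟨σ₂, hσ₂, h₂⟩ := h (-1)
  have hdiff : σ₀ - σ₁ = σ₂ - σ₀ :=
    hw.fintypeLinearCombination_injective (by rw [map_sub, map_sub, h₀, h₁, h₂]; module)
  have key : ∀ p q r : ZMod 3, p ≠ 0 → q ≠ 0 → r ≠ 0 → p - q = r - p → q = p := by decide
  have hσ : σ₁ = σ₀ := funext fun i => key _ _ _ (hσ₀ i) (hσ₁ i) (hσ₂ i) (congrFun hdiff i)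
  apply hz
  have := h₁.symm.trans (hσ ▸ h₀)
  simpa using this

variable {E : Type*} [Fintype E]

noncomputable def boundary (o : E → V × V) : (E → ZMod 3) →ₗ[ZMod 3] V → ZMod 3 :=
  Fintype.linearCombination (ZMod 3) fun e => arcVec (o e).1 (o e).2

def IsNZBoundary (o : E → V × V) (A : Set E) (β : V → ZMod 3) : Prop :=
  ∃ ε : E → ZMod 3, Function.support ε = A ∧ boundary o ε = β

lemma isNZBoundary_empty (o : E → V × V) : IsNZBoundary o ∅ 0 :=
  ⟨0, Function.support_zero, map_zero _⟩

lemma exists_isNZBoundary (o : E → V × V) (A : Set E) : ∃ β, IsNZBoundary o A β :=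
  ⟨_, A.indicator 1, by simp [Set.support_indicator], rfl⟩

lemma IsNZBoundary.union {o : E → V × V} {A B : Set E} {β₁ β₂ : V → ZMod 3}
    (h₁ : IsNZBoundary o A β₁) (h₂ : IsNZBoundary o B β₂) (hAB : Disjoint A B) :
    IsNZBoundary o (A ∪ B) (β₁ + β₂) := by
  obtain ⟨ε₁, rfl, rfl⟩ := h₁
  obtain ⟨ε₂, rfl, rfl⟩ := h₂
  refine ⟨ε₁ + ε₂, Set.ext fun e => ?_, map_add _ _ _⟩
  by_cases h₁ : e ∈ Function.support ε₁
  · have h₂ : ε₂ e = 0 := Function.notMem_support.mp (Set.disjoint_left.mp hAB h₁)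
    simp [h₂]
  · simp_all [Function.notMem_support.mp h₁]

lemma sub_apply_eq_zero_of_forall_notMem {M : Type*} [AddGroup M] {S : Set V} {v : V}
    {β γ : V → M} (hβ : ∀ x ∉ insert v S, β x = 0) (hγ : ∀ x ∉ insert v S, γ x = 0)
    (hv : γ v = β v) :
    ∀ x ∉ S, (β - γ) x = 0 := by
  intro x hx
  by_cases hxv : x = v
  · simp [hxv, hv]
  · simp [hβ x (by simp [hx, hxv]), hγ x (by simp [hx, hxv])]

variable [Fintype V]

lemma sum_arcVec (a b : V) : ∑ x, arcVec a b x = 0 := by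
  simp [arcVec, Finset.sum_sub_distrib]

lemma sum_triVec (a b c : V) : ∑ x, triVec a b c x = 0 := by
  simp only [triVec, Pi.add_apply, Finset.sum_add_distrib, Finset.sum_pi_single', Finset.mem_univ,
    if_true]
  decide

lemma dotProduct_arcVec (μ : V → ZMod 3) (a b : V) : μ ⬝ᵥ arcVec a b = μ a - μ b := by
  simp [arcVec, dotProduct_sub, dotProduct_single]

lemma dotProduct_triVec (μ : V → ZMod 3) (a b c : V) :
    μ ⬝ᵥ triVec a b c = μ a + μ b + μ c := by
  simp [triVec, dotProduct_add, dotProduct_single]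

lemma dotProduct_eq_zero_of_mem_nzCombinations {R : Type*} [CommSemiring R] [Fintype ι]
    {w : ι → V → R} {μ : V → R} (hμ : ∀ i, μ ⬝ᵥ w i = 0) {β : V → R}
    (hβ : β ∈ nzCombinations R w) : μ ⬝ᵥ β = 0 := by
  obtain ⟨σ, -, rfl⟩ := hβ
  simp [Fintype.linearCombination_apply, dotProduct_sum, dotProduct_smul, hμ]

lemma update_dotProduct_of_apply_eq_zero {R : Type*} [NonUnitalNonAssocSemiring R] (μ w : V → R)
    {v : V} (hv : w v = 0) (c : R) :
    Function.update μ v c ⬝ᵥ w = μ ⬝ᵥ w :=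
  Finset.sum_congr rfl fun x _ => by by_cases hx : x = v <;> simp [hx, hv]

lemma eq_smul_arcVec {a b : V} (hab : a ≠ b) {β : V → ZMod 3}
    (hβ : ∀ x ∉ ({a, b} : Set V), β x = 0) (hsum : ∑ x, β x = 0) : β = β a • arcVec a b := by
  have hb : β b = -β a := by
    rw [Fintype.sum_eq_add a b hab fun x hx => hβ x (by simp [hx.1, hx.2])] at hsum
    exact eq_neg_of_add_eq_zero_right hsum
  ext x
  by_cases hxa : x = a
  · simp [hxa, arcVec, hab]
  by_cases hxb : x = b
  · simp [hxb, arcVec, Ne.symm hab, hb]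
  · simp [hβ x (by simp [hxa, hxb]), arcVec_apply_of_ne hxa hxb]

lemma IsNZBoundary.sum_eq_zero {o : E → V × V} {A : Set E} {β : V → ZMod 3}
    (h : IsNZBoundary o A β) : ∑ x, β x = 0 := by
  obtain ⟨ε, -, rfl⟩ := h
  simp only [boundary, Fintype.linearCombination_apply, Finset.sum_apply, Pi.smul_apply,
    smul_eq_mul]
  rw [Finset.sum_comm]
  simp [← Finset.mul_sum, sum_arcVec]

end Z3Flow

open Z3Flow

namespace Multigraph

variable {G : Multigraph} {o : G.E → G.V × G.V}

lemma exists_isOrientation (G : Multigraph) : ∃ o, G.IsOrientation o :=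
  ⟨fun e => Quot.out (G.ends e), fun _ => (Quot.out_eq _).symm⟩

lemma natCast_outDeg_sub_inDeg (D : G.E → G.V × G.V) (v : G.V) :
    (G.outDeg D v : ZMod 3) - G.inDeg D v = boundary D 1 v := by
  simp only [outDeg, inDeg, Set.ncard_eq_toFinset_card', Set.toFinset_ofPred,
    Finset.natCast_card_filter, boundary, Fintype.linearCombination_apply, Pi.one_apply, one_smul,
    Finset.sum_apply, arcVec, Pi.sub_apply, Pi.single_apply, Finset.sum_sub_distrib, eq_comm]

lemma boundary_eq_boundary_reverse {ε : G.E → ZMod 3} (hε : ∀ e, ε e ≠ 0) :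
    boundary o ε = boundary (fun e => if ε e = 1 then o e else (o e).swap) 1 := by
  simp only [boundary, Fintype.linearCombination_apply]
  refine Finset.sum_congr rfl fun e _ => ?_
  by_cases h : ε e = 1
  · simp [h]
  · have hneg : ε e = -1 := by
      have key : ∀ x : ZMod 3, x ≠ 0 → x ≠ 1 → x = -1 := by decide
      exact key _ (hε e) h
    rw [if_neg h, hneg, Prod.fst_swap, Prod.snd_swap, arcVec_swap, Pi.one_apply, one_smul,
      neg_one_smul, neg_neg]

lemma z3Connected_of_isNZBoundary (ho : G.IsOrientation o)
    (h : ∀ β : G.V → ZMod 3, ∑ v, β v = 0 → IsNZBoundary o Set.univ β) : G.Z3Connected := by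
  intro β hβ
  obtain ⟨ε, hε, rfl⟩ := h β hβ
  have hε' : ∀ e, ε e ≠ 0 := fun e => Function.mem_support.mp (hε ▸ Set.mem_univ e)
  refine ⟨fun e => if ε e = 1 then o e else (o e).swap, fun e => ?_, fun v => ?_⟩
  · by_cases h : ε e = 1 <;> simp [h, ho e, Sym2.eq_swap]
  · rw [natCast_outDeg_sub_inDeg, boundary_eq_boundary_reverse hε']

lemma isNZBoundary_singleton (ho : G.IsOrientation o) {e : G.E} {a b : G.V}
    (hab : G.ends e = s(a, b)) {c : ZMod 3} (hc : c ≠ 0) :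
    IsNZBoundary o {e} (c • arcVec a b) := by
  rcases Sym2.eq_iff.mp ((ho e).symm.trans hab) with ⟨h₁, h₂⟩ | ⟨h₁, h₂⟩
  · exact ⟨Pi.single e c, Pi.support_single_of_ne hc,
      by rw [boundary, Fintype.linearCombination_apply_single, h₁, h₂]⟩
  · refine ⟨Pi.single e (-c), Pi.support_single_of_ne (neg_ne_zero.mpr hc), ?_⟩
    rw [boundary, Fintype.linearCombination_apply_single, h₁, h₂, arcVec_swap, neg_smul_neg]

lemma _root_.Z3Flow.IsNZBoundary.insert (ho : G.IsOrientation o) {A : Set G.E}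
    {α : G.V → ZMod 3} (h : IsNZBoundary o A α) {e : G.E} (he : e ∉ A) {a b : G.V}
    (hab : G.ends e = s(a, b)) {c : ZMod 3} (hc : c ≠ 0) :
    IsNZBoundary o (insert e A) (c • arcVec a b + α) := by
  rw [Set.insert_eq]
  exact (isNZBoundary_singleton ho hab hc).union h (Set.disjoint_singleton_left.mpr he)

lemma isNZBoundary_range {ι : Type*} [Fintype ι] (ho : G.IsOrientation o) {g : ι → G.E}
    (hg : Function.Injective g) {p q : ι → G.V} (hpq : ∀ i, G.ends (g i) = s(p i, q i))
    {c : ι → ZMod 3} (hc : ∀ i, c i ≠ 0) :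
    IsNZBoundary o (Set.range g) (∑ i, c i • arcVec (p i) (q i)) := by
  suffices ∀ s : Finset ι, IsNZBoundary o (g '' s) (∑ i ∈ s, c i • arcVec (p i) (q i)) by
    simpa using this Finset.univ
  intro s
  induction s using Finset.induction_on with
  | empty => simpa using isNZBoundary_empty o
  | insert i s hi ih =>
    rw [Finset.coe_insert, Set.image_insert_eq, Finset.sum_insert hi]
    exact ih.insert ho (by rwa [hg.mem_set_image]) (hpq i) (hc i)

lemma isNZBoundary_cycle (ho : G.IsOrientation o) {n : ℕ} {f : Fin (n + 2) → G.V}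
    {g : Fin (n + 2) → G.E} (hg : Function.Injective g)
    (hfg : ∀ i, G.ends (g i) = s(f i, f (i + 1))) (d : ZMod 3) :
    IsNZBoundary o (Set.range g) (d • arcVec (f 0) (f 1)) := by
  obtain ⟨s, hs, hsd⟩ : ∃ s : ZMod 3, s ≠ 0 ∧ s + d ≠ 0 := by revert d; decide
  have htelescope : ∑ i, arcVec (f i) (f (i + 1)) = 0 := by
    simp only [arcVec, Finset.sum_sub_distrib]
    exact sub_eq_zero.mpr
      (Equiv.sum_comp (Equiv.addRight (1 : Fin (n + 2))) fun i => Pi.single (f i) 1).symm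
  convert isNZBoundary_range ho hg hfg (c := fun i => s + if i = 0 then d else 0)
    (fun i => by split_ifs <;> simpa) using 1
  simp only [add_smul, Finset.sum_add_distrib, ← Finset.smul_sum, htelescope, ite_smul, zero_smul,
    Finset.sum_ite_eq', Finset.mem_univ, if_true, smul_zero, zero_add]

lemma HasCycleIn.exists_fin {A : Set G.E} (h : G.HasCycleIn A) :
    ∃ (n : ℕ) (f : Fin (n + 2) → G.V) (g : Fin (n + 2) → G.E), Function.Injective g ∧
      f 0 ≠ f 1 ∧ Set.range g ⊆ A ∧ ∀ i, G.ends (g i) = s(f i, f (i + 1)) := by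
  obtain ⟨vs, es, hlen, hvs, hes, hlen', hA, hends⟩ := h
  obtain ⟨n, hn⟩ : ∃ n, vs.length = n + 2 := ⟨vs.length - 2, by omega⟩
  refine ⟨n, fun i => vs.get (i.cast hn.symm), fun i => es.get (i.cast (hlen'.trans hn).symm),
    fun i j hij => ?_, fun h => ?_, ?_, fun i => ?_⟩
  · simpa [Fin.ext_iff] using hes.get_inj_iff.mp hij
  · simpa [Fin.ext_iff] using hvs.get_inj_iff.mp h
  · rintro _ ⟨i, rfl⟩
    exact hA _ (List.get_mem _ _)
  · have hi := i.2
    convert hends i (by omega) (by omega) (Nat.mod_lt _ (by omega)) using 3 <;>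
      simp [Fin.ext_iff, Fin.val_add, hn]

lemma HasCycleIn.exists_isNZBoundary (ho : G.IsOrientation o) {A : Set G.E}
    (h : G.HasCycleIn A) :
    ∃ C ⊆ A, ∃ u v : G.V, u ≠ v ∧ ∀ d : ZMod 3, IsNZBoundary o C (d • arcVec u v) := by
  obtain ⟨n, f, g, hg, hf, hgA, hfg⟩ := h.exists_fin
  exact ⟨_, hgA, f 0, f 1, hf, isNZBoundary_cycle ho hg hfg⟩

lemma IsTriangleTree.subgraph {S : Set G.V} {F : Set G.E} (h : G.IsTriangleTree S F) :
    G.Subgraph S F := by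
  induction h with
  | base x y z e₁ e₂ e₃ _ _ _ h₁ h₂ h₃ =>
    rintro e (rfl | rfl | rfl) u hu <;> simp only [h₁, h₂, h₃, Sym2.mem_iff] at hu <;>
      rcases hu with rfl | rfl <;> simp
  | grow S F _ v a b _ e he hab e₁ e₂ h₁ h₂ ih =>
    have ha : a ∈ S := ih e he a (by simp [hab])
    have hb : b ∈ S := ih e he b (by simp [hab])
    rintro e' (rfl | rfl | he') u hu
    · rw [h₁, Sym2.mem_iff] at hu
      rcases hu with rfl | rfl <;> simp [ha]
    · rw [h₂, Sym2.mem_iff] at hu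
      rcases hu with rfl | rfl <;> simp [hb]
    · exact Set.mem_insert_of_mem v (ih e' he' u hu)

structure TreeCertificate (G : Multigraph) (o : G.E → G.V × G.V) (S : Set G.V) (F : Set G.E) :
    Type where
  k : ℕ
  w : Fin k → G.V → ZMod 3
  μ : G.V → ZMod 3
  w_eq_zero : ∀ t, ∀ x ∉ S, w t x = 0
  linearIndependent : LinearIndependent (ZMod 3) w
  dotProduct_w_eq_zero : ∀ t, μ ⬝ᵥ w t = 0
  not_isDiag : ∀ e ∈ F, ¬ ((G.ends e).map μ).IsDiag
  isNZBoundary_or_mem : ∀ β : G.V → ZMod 3, (∀ x ∉ S, β x = 0) → ∑ x, β x = 0 →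
    IsNZBoundary o F β ∨ β ∈ nzCombinations (ZMod 3) w

namespace TreeCertificate

noncomputable def ofEdge (ho : G.IsOrientation o) {e : G.E} {a b : G.V}
    (hab : G.ends e = s(a, b)) : TreeCertificate G o {a, b} {e} where
  k := 0
  w := Fin.elim0
  μ := Pi.single b 1
  w_eq_zero t := t.elim0
  linearIndependent := linearIndependent_empty_type
  dotProduct_w_eq_zero t := t.elim0
  not_isDiag := by
    have hne : a ≠ b := by simpa [hab] using G.loopless e
    rintro _ rfl
    simp [hab, hne]
  isNZBoundary_or_mem β hβ hsum := by
    have hne : a ≠ b := by simpa [hab] using G.loopless e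
    rw [eq_smul_arcVec hne hβ hsum]
    by_cases h : β a = 0
    · exact Or.inr ⟨0, fun t => t.elim0, by simp [h, Fintype.linearCombination_apply]⟩
    · exact Or.inl (isNZBoundary_singleton ho hab h)

variable {S : Set G.V} {F : Set G.E} (T : TreeCertificate G o S F) {v a b : G.V} {e₁ e₂ : G.E}

lemma triVec_notMem_span (hv : v ∉ S) (hva : v ≠ a) (hvb : v ≠ b) :
    triVec v a b ∉ Submodule.span (ZMod 3) (Set.range T.w) := by
  intro hmem
  have hle : Submodule.span (ZMod 3) (Set.range T.w) ≤ LinearMap.ker (LinearMap.proj v) :=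
    Submodule.span_le.mpr (by rintro _ ⟨t, rfl⟩; exact LinearMap.mem_ker.mpr (T.w_eq_zero t v hv))
  simpa [triVec, hva.symm, hvb.symm] using hle hmem

lemma isNZBoundary_of_apply_eq_zero (ho : G.IsOrientation o) (haS : a ∈ S) (hbS : b ∈ S)
    (hv : v ∉ S) (hμ : T.μ a ≠ T.μ b) (he₁ : e₁ ∉ insert e₂ F) (he₂ : e₂ ∉ F)
    (h₁ : G.ends e₁ = s(v, a)) (h₂ : G.ends e₂ = s(v, b)) {β : G.V → ZMod 3}
    (hβ : ∀ x ∉ insert v S, β x = 0) (hsum : ∑ x, β x = 0) (hβv : β v = 0) :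
    IsNZBoundary o (insert e₁ (insert e₂ F)) β := by
  have hF (c : ZMod 3) (hc : c ≠ 0) (h : IsNZBoundary o F (β - c • arcVec b a)) :
      IsNZBoundary o (insert e₁ (insert e₂ F)) β := by
    convert (h.insert ho he₂ h₂ (neg_ne_zero.mpr hc)).insert ho he₁ h₁ hc using 1
    rw [← arcVec_sub_arcVec v a b]
    module
  have hS (c : ZMod 3) : ∀ x ∉ S, (β - c • arcVec b a) x = 0 := by
    refine sub_apply_eq_zero_of_forall_notMem hβ (fun x hx => ?_) ?_
    · simp only [Set.mem_insert_iff, not_or] at hx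
      simp [arcVec_apply_of_ne (ne_of_mem_of_not_mem hbS hx.2).symm
        (ne_of_mem_of_not_mem haS hx.2).symm]
    · simp [hβv, arcVec_apply_of_ne (ne_of_mem_of_not_mem hbS hv).symm
        (ne_of_mem_of_not_mem haS hv).symm]
  have hsum' (c : ZMod 3) : ∑ x, (β - c • arcVec b a) x = 0 := by
    simp [Finset.sum_sub_distrib, hsum, ← Finset.mul_sum, sum_arcVec]
  rcases T.isNZBoundary_or_mem _ (hS 1) (hsum' 1) with h | hmem₁
  · exact hF 1 one_ne_zero h
  rcases T.isNZBoundary_or_mem _ (hS (-1)) (hsum' (-1)) with h | hmem₂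
  · exact hF (-1) (by decide) h
  -- `μ` is orthogonal to both `β ∓ arcVec b a`, which forces `μ a = μ b`
  have h₁' := dotProduct_eq_zero_of_mem_nzCombinations T.dotProduct_w_eq_zero hmem₁
  have h₂' := dotProduct_eq_zero_of_mem_nzCombinations T.dotProduct_w_eq_zero hmem₂
  simp only [dotProduct_sub, dotProduct_smul, dotProduct_arcVec, smul_eq_mul] at h₁' h₂'
  have key : ∀ p q r : ZMod 3, p - 1 * (q - r) = 0 → p - -1 * (q - r) = 0 → r = q := by decide
  exact absurd (key _ _ _ h₁' h₂') hμ

lemma isNZBoundary_or_mem_of_apply_ne_zero (ho : G.IsOrientation o) (haS : a ∈ S) (hbS : b ∈ S)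
    (hv : v ∉ S) (he₁ : e₁ ∉ insert e₂ F) (he₂ : e₂ ∉ F)
    (h₁ : G.ends e₁ = s(v, a)) (h₂ : G.ends e₂ = s(v, b)) {β : G.V → ZMod 3}
    (hβ : ∀ x ∉ insert v S, β x = 0) (hsum : ∑ x, β x = 0) (hβv : β v ≠ 0) :
    IsNZBoundary o (insert e₁ (insert e₂ F)) β ∨
      β ∈ nzCombinations (ZMod 3) (Fin.snoc T.w (triVec v a b)) := by
  have hva : v ≠ a := (ne_of_mem_of_not_mem haS hv).symm
  have hvb : v ≠ b := (ne_of_mem_of_not_mem hbS hv).symm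
  have hS : ∀ x ∉ S, (β - β v • triVec v a b) x = 0 := by
    refine sub_apply_eq_zero_of_forall_notMem hβ (fun x hx => ?_) ?_
    · simp only [Set.mem_insert_iff, not_or] at hx
      simp [triVec_apply_of_ne hx.1 (ne_of_mem_of_not_mem haS hx.2).symm
        (ne_of_mem_of_not_mem hbS hx.2).symm]
    · simp [triVec, hva.symm, hvb.symm]
  have hsum' : ∑ x, (β - β v • triVec v a b) x = 0 := by
    simp [Finset.sum_sub_distrib, hsum, ← Finset.mul_sum, sum_triVec]
  rcases T.isNZBoundary_or_mem _ hS hsum' with h | ⟨σ, hσ, hσβ⟩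
  · left
    convert (h.insert ho he₂ h₂ (neg_ne_zero.mpr hβv)).insert ho he₁ h₁ (neg_ne_zero.mpr hβv)
      using 1
    rw [← neg_neg (triVec v a b), ← arcVec_add_arcVec]
    module
  · right
    refine ⟨Fin.snoc σ (β v), fun t => ?_, ?_⟩
    · induction t using Fin.lastCases with
      | last => simpa using hβv
      | cast t => simpa using hσ t
    · simp only [Fintype.linearCombination_apply, Fin.sum_univ_castSucc, Fin.snoc_castSucc,
        Fin.snoc_last] at hσβ ⊢
      rw [hσβ, sub_add_cancel]

noncomputable def grow (ho : G.IsOrientation o) (hsub : G.Subgraph S F) (hv : v ∉ S) {e : G.E}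
    (he : e ∈ F) (hab : G.ends e = s(a, b)) (h₁ : G.ends e₁ = s(v, a))
    (h₂ : G.ends e₂ = s(v, b)) : TreeCertificate G o (insert v S) (insert e₁ (insert e₂ F)) :=
  have haS : a ∈ S := hsub e he a (by simp [hab])
  have hbS : b ∈ S := hsub e he b (by simp [hab])
  have hva : v ≠ a := (ne_of_mem_of_not_mem haS hv).symm
  have hvb : v ≠ b := (ne_of_mem_of_not_mem hbS hv).symm
  have hμ : T.μ a ≠ T.μ b := by simpa [hab] using T.not_isDiag e he
  have he₂ : e₂ ∉ F := fun h => hv (hsub e₂ h v (by simp [h₂]))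
  have he₁ : e₁ ∉ insert e₂ F := by
    rintro (rfl | h)
    · rw [h₁, Sym2.congr_right] at h₂
      exact hμ (congrArg T.μ h₂)
    · exact hv (hsub e₁ h v (by simp [h₁]))
  have hcolour : ∀ p q : ZMod 3, p ≠ q → -(p + q) ≠ p ∧ -(p + q) ≠ q := by decide
  { k := T.k + 1
    w := Fin.snoc T.w (triVec v a b)
    μ := Function.update T.μ v (-(T.μ a + T.μ b))
    w_eq_zero := by
      intro t x hx
      simp only [Set.mem_insert_iff, not_or] at hx
      induction t using Fin.lastCases with
      | last =>
        simpa using triVec_apply_of_ne hx.1 (ne_of_mem_of_not_mem haS hx.2).symm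
          (ne_of_mem_of_not_mem hbS hx.2).symm
      | cast t => simpa using T.w_eq_zero t x hx.2
    linearIndependent :=
      linearIndependent_finSnoc.mpr ⟨T.linearIndependent, T.triVec_notMem_span hv hva hvb⟩
    dotProduct_w_eq_zero := by
      intro t
      induction t using Fin.lastCases with
      | last =>
        simp only [Fin.snoc_last, dotProduct_triVec, Function.update_self,
          Function.update_of_ne hva.symm, Function.update_of_ne hvb.symm]
        ring
      | cast t =>
        rw [Fin.snoc_castSucc, update_dotProduct_of_apply_eq_zero _ _ (T.w_eq_zero t v hv)]
        exact T.dotProduct_w_eq_zero t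
    not_isDiag := by
      rintro e' (rfl | rfl | he')
      · simpa [h₁, Function.update_of_ne hva.symm] using (hcolour _ _ hμ).1
      · simpa [h₂, Function.update_of_ne hvb.symm] using (hcolour _ _ hμ).2
      · rw [Sym2.map_congr (g := T.μ) fun x hx =>
          Function.update_of_ne (ne_of_mem_of_not_mem (hsub e' he' x hx) hv) _ _]
        exact T.not_isDiag e' he'
    isNZBoundary_or_mem := fun β hβ hsum => by
      by_cases hβv : β v = 0
      · exact Or.inl (T.isNZBoundary_of_apply_eq_zero ho haS hbS hv hμ he₁ he₂ h₁ h₂ hβ hsum hβv)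
      · exact T.isNZBoundary_or_mem_of_apply_ne_zero ho haS hbS hv he₁ he₂ h₁ h₂ hβ hsum hβv }

lemma isNZBoundary_union (T : TreeCertificate G o Set.univ F) {C : Set G.E}
    (hFC : Disjoint F C) {u v : G.V} (huv : u ≠ v)
    (hC : ∀ d : ZMod 3, IsNZBoundary o C (d • arcVec u v)) {β : G.V → ZMod 3}
    (hβ : ∑ x, β x = 0) : IsNZBoundary o (F ∪ C) β := by
  by_contra hne
  refine not_forall_sub_smul_mem_nzCombinations T.linearIndependent (arcVec_ne_zero huv) β
    fun d => ?_
  have hsum : ∑ x, (β - d • arcVec u v) x = 0 := by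
    simp [Finset.sum_sub_distrib, hβ, ← Finset.mul_sum, sum_arcVec]
  refine (T.isNZBoundary_or_mem _ (fun x hx => absurd (Set.mem_univ x) hx) hsum).resolve_left fun hF => hne ?_
  simpa using hF.union (hC d) hFC

end TreeCertificate

lemma IsTriangleTree.nonempty_treeCertificate (ho : G.IsOrientation o) {S : Set G.V}
    {F : Set G.E} (h : G.IsTriangleTree S F) : Nonempty (TreeCertificate G o S F) := by
  induction h with
  | base x y z e₁ e₂ e₃ hxy hxz hyz h₁ h₂ h₃ =>
    have hsub : G.Subgraph {x, y} {e₁} := by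
      rintro _ rfl u hu
      simpa [h₁] using hu
    have hS : insert z {x, y} = ({x, y, z} : Set G.V) := by ext; simp; tauto
    have hF : insert e₃ (insert e₂ {e₁}) = ({e₁, e₂, e₃} : Set G.E) := by ext; simp; tauto
    rw [← hS, ← hF]
    exact ⟨(TreeCertificate.ofEdge ho h₁).grow ho hsub (by simp [hxz.symm, hyz.symm])
      (Set.mem_singleton e₁) h₁ (h₃.trans Sym2.eq_swap) (h₂.trans Sym2.eq_swap)⟩
  | grow S F hT v a b hv e he hab e₁ e₂ h₁ h₂ ih =>
    exact ⟨ih.some.grow ho hT.subgraph hv he hab h₁ h₂⟩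

end Multigraph

/-- Let `G` contain a spanning triangle-tree `T`. If `G − E(T)`
contains a cycle (possibly a 2-cycle of parallel edges), then `G` is `Z3`-connected. -/
theorem stmt_9 (G : Multigraph) (F : Set G.E) (hT : G.IsTriangleTree Set.univ F)
    (hcyc : G.HasCycleIn {e : G.E | e ∉ F}) :
    G.Z3Connected := by
  obtain ⟨o, ho⟩ := G.exists_isOrientation
  obtain ⟨T⟩ := hT.nonempty_treeCertificate ho
  obtain ⟨C, hCF, u, v, huv, hC⟩ := hcyc.exists_isNZBoundary ho
  have hFC : Disjoint F C := Set.disjoint_right.mpr hCF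
  obtain ⟨ρ, hρ⟩ := exists_isNZBoundary o (F ∪ C)ᶜ
  refine Multigraph.z3Connected_of_isNZBoundary ho fun β hβ => ?_
  have hFC' : IsNZBoundary o (F ∪ C) (β - ρ) :=
    T.isNZBoundary_union hFC huv hC (by
      simp only [Pi.sub_apply, Finset.sum_sub_distrib, hβ, hρ.sum_eq_zero, sub_zero])
  have := hFC'.union hρ disjoint_compl_right
  rwa [Set.union_compl_self, sub_add_cancel] at this
end
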